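/- arXiv:2401.17863 — 9 statements merged into one kernel-verified Lean document; each statement's English description precedes it below -/
import Mathlib

section
/- Let A = PU where P is positive semidefinite and U is unitary. Then P commutes with U*PU if and only if P commutes with UPU*. -/
open Matrix ComplexOrder

theorem commute_conj_iff_commute_conj' {n : ℕ} (P U : Matrix (Fin n) (Fin n) ℂ)
    (hP : P.PosSemidef) (hU : Uᴴ * U = 1) :
    Commute P (Uᴴ * P * U) ↔ Commute P (U * P * Uᴴ) := by
  have hU' : U * Uᴴ = 1 := mul_eq_one_comm.mp hU
  have hc : ∀ X : Matrix (Fin n) (Fin n) ℂ, U * (Uᴴ * X) = X := fun X => by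
    rw [← Matrix.mul_assoc, hU', Matrix.one_mul]
  have hc' : ∀ X : Matrix (Fin n) (Fin n) ℂ, Uᴴ * (U * X) = X := fun X => by
    rw [← Matrix.mul_assoc, hU, Matrix.one_mul]
  constructor <;> intro h
  · have h2 : U * (P * (Uᴴ * P * U)) * Uᴴ = U * ((Uᴴ * P * U) * P) * Uᴴ := by
      rw [h.eq]
    simp only [Matrix.mul_assoc, hc, hc', hU, hU', Matrix.mul_one, Matrix.one_mul] at h2
    show P * (U * P * Uᴴ) = (U * P * Uᴴ) * P
    simp only [Matrix.mul_assoc]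
    exact h2.symm
  · have h2 : Uᴴ * (P * (U * P * Uᴴ)) * U = Uᴴ * ((U * P * Uᴴ) * P) * U := by
      rw [h.eq]
    simp only [Matrix.mul_assoc, hc, hc', hU, hU', Matrix.mul_one, Matrix.one_mul] at h2
    show P * (Uᴴ * P * U) = (Uᴴ * P * U) * P
    simp only [Matrix.mul_assoc]
    exact h2.symm
end

section
/- If A = PU is a polar decomposition with P positive semidefinite having pairwise distinct eigenvalues and U unitary, then A is unitarily equivalent to a weighted permutation matrix, provided A is half-normal. -/
open Matrix ComplexOrder

def IsWeightedPerm {n : ℕ} (A : Matrix (Fin n) (Fin n) ℂ) : Prop :=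
  (∀ i j₁ j₂, A i j₁ ≠ 0 → A i j₂ ≠ 0 → j₁ = j₂) ∧
  (∀ j i₁ i₂, A i₁ j ≠ 0 → A i₂ j ≠ 0 → i₁ = i₂)

/-- Key combinatorial lemma: if `W` is unitary and `Wᴴ D² W` commutes with `D²` where
`D = diagonal e` with `e` nonnegative injective, then `D * W` is a weighted permutation. -/
lemma aux_weightedPerm {n : ℕ} (e : Fin n → ℝ) (he0 : ∀ i, 0 ≤ e i)
    (hinj : Function.Injective e) (W : Matrix (Fin n) (Fin n) ℂ)
    (hWW : Wᴴ * W = 1) (hWW' : W * Wᴴ = 1)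
    (hcomm : (Wᴴ * ((diagonal (fun i => (e i : ℂ))) * (diagonal (fun i => (e i : ℂ)))) * W) *
        ((diagonal (fun i => (e i : ℂ))) * (diagonal (fun i => (e i : ℂ)))) =
      ((diagonal (fun i => (e i : ℂ))) * (diagonal (fun i => (e i : ℂ)))) *
        (Wᴴ * ((diagonal (fun i => (e i : ℂ))) * (diagonal (fun i => (e i : ℂ)))) * W)) :
    IsWeightedPerm ((diagonal (fun i => (e i : ℂ))) * W) := by
  classical
  set D : Matrix (Fin n) (Fin n) ℂ := diagonal (fun i => (e i : ℂ)) with hD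
  set M : Matrix (Fin n) (Fin n) ℂ := Wᴴ * (D * D) * W with hM
  have hd2 : D * D = diagonal (fun i => ((e i : ℂ))^2) := by
    rw [hD, Matrix.diagonal_mul_diagonal]
    congr 1; funext i; ring
  have hsqinj : Function.Injective (fun i => ((e i : ℂ))^2) := by
    intro i k h
    simp only at h
    have h2 : (e i)^2 = (e k)^2 := by exact_mod_cast h
    exact hinj (by rw [← Real.sqrt_sq (he0 i), ← Real.sqrt_sq (he0 k), h2])
  -- M is diagonal
  have hMdiag : ∀ i j, i ≠ j → M i j = 0 := by
    intro i j hij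
    by_contra hM0
    rw [hd2] at hcomm
    have h := congrArg (fun X => X i j) hcomm
    simp only [Matrix.mul_diagonal, Matrix.diagonal_mul] at h
    have h' : M i j * ((e j : ℂ))^2 = M i j * ((e i : ℂ))^2 := by rw [h, mul_comm]
    have := mul_left_cancel₀ hM0 h'
    exact hij (hsqinj this).symm
  -- D² W = W M
  have hDW : (D * D) * W = W * M := by
    rw [hM]
    simp only [← mul_assoc]
    rw [hWW', one_mul]
  have hkey : ∀ i j, W i j ≠ 0 → ((e i : ℂ))^2 = M j j := by
    intro i j hij
    have hDW' : diagonal (fun i => ((e i : ℂ))^2) * W = W * M := by rw [← hd2]; exact hDW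
    have h := congrArg (fun X => X i j) hDW'
    simp only [Matrix.mul_apply] at h
    have hlhs : ∑ k, diagonal (fun i => ((e i : ℂ))^2) i k * W k j = ((e i : ℂ))^2 * W i j := by
      rw [Finset.sum_eq_single i (fun k _ hk => by
          rw [Matrix.diagonal_apply_ne _ (Ne.symm hk), zero_mul])
        (fun h => absurd (Finset.mem_univ i) h), Matrix.diagonal_apply_eq]
    have hrhs : ∑ k, W i k * M k j = W i j * M j j := by
      apply Finset.sum_eq_single
      · intro k _ hk; rw [hMdiag k j hk, mul_zero]
      · intro h; exact absurd (Finset.mem_univ j) h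
    rw [hlhs, hrhs] at h
    have h' : W i j * ((e i : ℂ))^2 = W i j * M j j := by rw [← h, mul_comm]
    exact mul_left_cancel₀ hij h'
  have hBij : ∀ i j, (D * W) i j = (e i : ℂ) * W i j := by
    intro i j; rw [hD, Matrix.diagonal_mul]
  constructor
  · -- rows
    intro i j₁ j₂ h1 h2
    rw [hBij] at h1 h2
    have hW1 : W i j₁ ≠ 0 := fun h => h1 (by rw [h, mul_zero])
    have hW2 : W i j₂ ≠ 0 := fun h => h2 (by rw [h, mul_zero])
    have hM1 := hkey i j₁ hW1
    have hM2 := hkey i j₂ hW2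
    by_contra hne
    have hsupp : ∀ k, W k j₂ ≠ 0 → k = i := fun k hk =>
      hsqinj ((hkey k j₂ hk).trans hM2.symm)
    have h := congrArg (fun X => X j₁ j₂) hWW
    simp only [Matrix.mul_apply, Matrix.one_apply, if_neg hne] at h
    have hsum : ∑ k, Wᴴ j₁ k * W k j₂ = Wᴴ j₁ i * W i j₂ := by
      apply Finset.sum_eq_single
      · intro k _ hk
        by_cases hz : W k j₂ = 0
        · rw [hz, mul_zero]
        · exact absurd (hsupp k hz) hk
      · intro h'; exact absurd (Finset.mem_univ i) h'
    rw [hsum] at h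
    rcases mul_eq_zero.mp h with h' | h'
    · exact hW1 (by simpa [Matrix.conjTranspose_apply] using h')
    · exact hW2 h'
  · -- columns
    intro j i₁ i₂ h1 h2
    rw [hBij] at h1 h2
    have hW1 : W i₁ j ≠ 0 := fun h => h1 (by rw [h, mul_zero])
    have hW2 : W i₂ j ≠ 0 := fun h => h2 (by rw [h, mul_zero])
    exact hsqinj ((hkey i₁ j hW1).trans (hkey i₂ j hW2).symm)

theorem distinct_singular_values_unitarily_equiv_weightedPerm {n : ℕ}
    (P U A : Matrix (Fin n) (Fin n) ℂ) (hP : P.PosSemidef)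
    (hdist : Function.Injective hP.isHermitian.eigenvalues)
    (hU : Uᴴ * U = 1) (hA : A = P * U)
    (hhalf : Commute (Aᴴ * A) (A * Aᴴ)) :
    ∃ (V B : Matrix (Fin n) (Fin n) ℂ), Vᴴ * V = 1 ∧ IsWeightedPerm B ∧ A = Vᴴ * B * V := by
  classical
  set e : Fin n → ℝ := hP.isHermitian.eigenvalues with he
  have henn : ∀ i, 0 ≤ e i := fun i => hP.eigenvalues_nonneg i
  set u : Matrix (Fin n) (Fin n) ℂ := (hP.isHermitian.eigenvectorUnitary : Matrix (Fin n) (Fin n) ℂ) with hu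
  have hu1 : uᴴ * u = 1 := by
    simpa [hu, Matrix.star_eq_conjTranspose] using
      (Unitary.mem_iff.mp hP.isHermitian.eigenvectorUnitary.2).1
  have hu2 : u * uᴴ = 1 := mul_eq_one_comm.mp hu1
  set D : Matrix (Fin n) (Fin n) ℂ := diagonal (fun i => (e i : ℂ)) with hD
  have hPspec : P = u * D * uᴴ := by
    have h := hP.isHermitian.spectral_theorem
    rw [h]
    congr 1
  set V : Matrix (Fin n) (Fin n) ℂ := uᴴ with hV
  have hVH : Vᴴ = u := by rw [hV, Matrix.conjTranspose_conjTranspose]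
  have hVV : Vᴴ * V = 1 := by rw [hVH, hV]; exact hu2
  have hVV' : V * Vᴴ = 1 := by rw [hVH, hV]; exact hu1
  have hUU' : U * Uᴴ = 1 := mul_eq_one_comm.mp hU
  set W : Matrix (Fin n) (Fin n) ℂ := V * U * Vᴴ with hW
  have conjm : ∀ X Y : Matrix (Fin n) (Fin n) ℂ,
      (V * X * Vᴴ) * (V * Y * Vᴴ) = V * (X * Y) * Vᴴ := by
    intro X Y
    calc (V * X * Vᴴ) * (V * Y * Vᴴ) = V * X * (Vᴴ * V) * (Y * Vᴴ) := by
          simp only [mul_assoc]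
      _ = V * (X * Y) * Vᴴ := by rw [hVV, mul_one]; simp only [mul_assoc]
  have conjT : ∀ X : Matrix (Fin n) (Fin n) ℂ, (V * X * Vᴴ)ᴴ = V * Xᴴ * Vᴴ := by
    intro X
    simp only [Matrix.conjTranspose_mul, Matrix.conjTranspose_conjTranspose, mul_assoc]
  have hWW : Wᴴ * W = 1 := by
    rw [hW, conjT, conjm, hU, mul_one, hVV']
  have hWW' : W * Wᴴ = 1 := mul_eq_one_comm.mp hWW
  set B : Matrix (Fin n) (Fin n) ℂ := D * W with hB
  have hAB : A = Vᴴ * B * V := by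
    rw [hA, hPspec, hB, hW, hVH]
    simp only [mul_assoc]
    rw [hu2, mul_one]
  have hBA : B = V * A * Vᴴ := by
    rw [hAB, hVH]
    simp only [mul_assoc]
    rw [hu1, mul_one, ← mul_assoc V u, hu1, one_mul]
  have hDH : Dᴴ = D := by
    rw [hD]
    simp only [Matrix.diagonal_conjTranspose, Pi.star_def, Complex.star_def, Complex.conj_ofReal]
  have hBBH : B * Bᴴ = D * D := by
    rw [hB, Matrix.conjTranspose_mul, hDH]
    calc D * W * (Wᴴ * D) = D * (W * Wᴴ) * D := by simp only [mul_assoc]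
      _ = D * D := by rw [hWW', mul_one]
  have hBHB : Bᴴ * B = Wᴴ * (D * D) * W := by
    rw [hB, Matrix.conjTranspose_mul, hDH]
    simp only [mul_assoc]
  have h1 : Bᴴ * B = V * (Aᴴ * A) * Vᴴ := by rw [hBA, conjT, conjm]
  have h2 : B * Bᴴ = V * (A * Aᴴ) * Vᴴ := by rw [hBA, conjT, conjm]
  have hcomm : (Wᴴ * (D * D) * W) * (D * D) = (D * D) * (Wᴴ * (D * D) * W) := by
    calc (Wᴴ * (D * D) * W) * (D * D) = (Bᴴ * B) * (B * Bᴴ) := by rw [hBHB, hBBH]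
      _ = (V * (Aᴴ * A) * Vᴴ) * (V * (A * Aᴴ) * Vᴴ) := by rw [h1, h2]
      _ = V * ((Aᴴ * A) * (A * Aᴴ)) * Vᴴ := conjm _ _
      _ = V * ((A * Aᴴ) * (Aᴴ * A)) * Vᴴ := by rw [hhalf.eq]
      _ = (V * (A * Aᴴ) * Vᴴ) * (V * (Aᴴ * A) * Vᴴ) := (conjm _ _).symm
      _ = (B * Bᴴ) * (Bᴴ * B) := by rw [h1, h2]
      _ = (D * D) * (Wᴴ * (D * D) * W) := by rw [hBHB, hBBH]
  have hInjE : Function.Injective e := hdist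
  have hperm : IsWeightedPerm B := by
    rw [hB, hD]
    exact aux_weightedPerm e henn hInjE W hWW hWW' (by rw [← hD]; exact hcomm)
  exact ⟨V, B, hVV, hperm, hAB⟩
end

section
/- Let A = PU where P is positive semidefinite with pairwise distinct eigenvalues, U is unitary, and A is half-normal. Then for every natural number k, P commutes with (U*)^k P U^k. -/
open Matrix ComplexOrder Unitary

/-! Half-normality of `A = P U` says that `P * P` commutes with `Q * Q`, where `Q = Uᴴ P U`.
Both have simple spectrum, and the commutant of a matrix with simple spectrum is commutative:
in its eigenbasis it consists of diagonal matrices. As `P` and `Q * Q` commute with `P * P`,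
`P` commutes with `Q * Q`; as `P` and `Q` commute with `Q * Q`, `P` commutes with `Q`.
Along the orbit `Q_j = Uᴴ^j P U^j` consecutive members commute, so `Q_j` and `Q_(j+k+1)`
both lie in the commutant of `Q_(j+1)`, and induction on `k` gives the theorem. -/

namespace Matrix

variable {K : Type*} [Field K] {n : Type*} [Fintype n] [DecidableEq n]

theorem eq_diagonal_diag_of_commute_diagonal {X : Matrix n n K} {d : n → K}
    (hd : Function.Injective d) (hX : Commute X (diagonal d)) : X = diagonal X.diag := by
  ext i j
  by_cases hij : i = j
  · subst hij; simp
  · have hentry := congrFun₂ hX.eq i j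
    rw [mul_diagonal, diagonal_mul] at hentry
    have : X i j * (d j - d i) = 0 := by linear_combination hentry
    simpa [hij, sub_eq_zero, (hd.ne hij).symm] using this

variable [StarRing K]

def IsUnitarilySimilarToDistinctDiagonal (M : Matrix n n K) : Prop :=
  ∃ (W : unitary (Matrix n n K)) (d : n → K),
    Function.Injective d ∧ M = conjStarAlgAut K _ W (diagonal d)

namespace IsUnitarilySimilarToDistinctDiagonal

variable {M : Matrix n n K}

theorem conjStarAlgAut (hM : M.IsUnitarilySimilarToDistinctDiagonal)
    (V : unitary (Matrix n n K)) :
    (Unitary.conjStarAlgAut K _ V M).IsUnitarilySimilarToDistinctDiagonal := by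
  obtain ⟨W, d, hd, rfl⟩ := hM
  exact ⟨V * W, d, hd, (conjStarAlgAut_mul_apply V W _).symm⟩

theorem commute_of_commute (hM : M.IsUnitarilySimilarToDistinctDiagonal)
    {X Y : Matrix n n K} (hX : Commute X M) (hY : Commute Y M) : Commute X Y := by
  obtain ⟨W, d, hd, rfl⟩ := hM
  set φ := Unitary.conjStarAlgAut K (Matrix n n K) W
  have hX' : φ.symm X = diagonal (φ.symm X).diag :=
    eq_diagonal_diag_of_commute_diagonal hd (by simpa using hX.map φ.symm)
  have hY' : φ.symm Y = diagonal (φ.symm Y).diag :=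
    eq_diagonal_diag_of_commute_diagonal hd (by simpa using hY.map φ.symm)
  rw [← φ.apply_symm_apply X, ← φ.apply_symm_apply Y, hX', hY']
  exact (commute_diagonal _ _).map φ

theorem commute_conjStarAlgAut_pow (hM : M.IsUnitarilySimilarToDistinctDiagonal)
    (u : unitary (Matrix n n K)) (h : Commute M (Unitary.conjStarAlgAut K _ u M)) (k : ℕ) :
    Commute M (Unitary.conjStarAlgAut K _ (u ^ k) M) := by
  set orbit : ℕ → Matrix n n K := fun j => Unitary.conjStarAlgAut K _ (u ^ j) M
  have hsucc : ∀ j, Commute (orbit j) (orbit (j + 1)) := fun j => by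
    simpa only [orbit, pow_succ, conjStarAlgAut_mul_apply] using
      h.map (Unitary.conjStarAlgAut K _ (u ^ j))
  suffices ∀ k j, Commute (orbit j) (orbit (j + k)) by simpa [orbit] using this k 0
  intro k
  induction k with
  | zero => exact fun j => Commute.refl _
  | succ k ih =>
    intro j
    have hnext := ih (j + 1)
    rw [add_right_comm] at hnext
    exact (hM.conjStarAlgAut (u ^ (j + 1))).commute_of_commute (hsucc j) hnext.symm

end IsUnitarilySimilarToDistinctDiagonal

theorem IsHermitian.isUnitarilySimilarToDistinctDiagonal {𝕜 : Type*} [RCLike 𝕜]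
    {A : Matrix n n 𝕜} (hA : A.IsHermitian) (hdist : Function.Injective hA.eigenvalues) :
    A.IsUnitarilySimilarToDistinctDiagonal :=
  ⟨hA.eigenvectorUnitary, _, RCLike.ofReal_injective.comp hdist, hA.spectral_theorem⟩

theorem PosSemidef.isUnitarilySimilarToDistinctDiagonal_mul_self {𝕜 : Type*} [RCLike 𝕜]
    {A : Matrix n n 𝕜} (hA : A.PosSemidef)
    (hdist : Function.Injective hA.isHermitian.eigenvalues) :
    (A * A).IsUnitarilySimilarToDistinctDiagonal := by
  set ev := hA.isHermitian.eigenvalues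
  refine ⟨hA.isHermitian.eigenvectorUnitary, fun i => (ev i : 𝕜) * ev i,
    fun i j hij => hdist ?_, ?_⟩
  · dsimp only at hij
    rw [← RCLike.ofReal_mul, ← RCLike.ofReal_mul, RCLike.ofReal_inj] at hij
    exact (mul_self_inj (hA.eigenvalues_nonneg i) (hA.eigenvalues_nonneg j)).mp hij
  · conv_lhs => rw [hA.isHermitian.spectral_theorem]
    rw [← map_mul, diagonal_mul_diagonal]
    rfl

end Matrix

theorem distinct_singular_values_commute_pow {n : ℕ}
    (P U A : Matrix (Fin n) (Fin n) ℂ) (hP : P.PosSemidef)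
    (hdist : Function.Injective hP.isHermitian.eigenvalues)
    (hU : Uᴴ * U = 1) (hA : A = P * U)
    (hhalf : Commute (Aᴴ * A) (A * Aᴴ)) :
    ∀ k : ℕ, Commute P ((Uᴴ) ^ k * P * U ^ k) := by
  have hU' : U * Uᴴ = 1 := mul_eq_one_comm.mp hU
  let u : unitary (Matrix (Fin n) (Fin n) ℂ) :=
    ⟨Uᴴ, mem_iff.mpr ⟨by simpa [star_eq_conjTranspose] using hU',
      by simpa [star_eq_conjTranspose] using hU⟩⟩
  have hconj : ∀ k X, conjStarAlgAut ℂ _ (u ^ k) X = (Uᴴ) ^ k * X * U ^ k := fun k X => by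
    simp [u, star_pow, star_eq_conjTranspose]
  have hAA : Aᴴ * A = conjStarAlgAut ℂ _ u (P * P) := by
    simpa [hA, hP.isHermitian.eq, Matrix.mul_assoc] using (hconj 1 (P * P)).symm
  have hAA' : A * Aᴴ = P * P := by
    rw [hA, conjTranspose_mul, hP.isHermitian.eq, Matrix.mul_assoc, ← Matrix.mul_assoc U, hU',
      Matrix.one_mul]
  set Q := conjStarAlgAut ℂ _ u P
  rw [hAA, hAA', map_mul] at hhalf
  have hP2 := hP.isUnitarilySimilarToDistinctDiagonal_mul_self hdist
  have hQ2 : (Q * Q).IsUnitarilySimilarToDistinctDiagonal := by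
    simpa only [map_mul] using hP2.conjStarAlgAut u
  have hPQ2 : Commute P (Q * Q) := hP2.commute_of_commute (.mul_right (.refl P) (.refl P)) hhalf
  have hPQ : Commute P Q := hQ2.commute_of_commute hPQ2 (.mul_right (.refl Q) (.refl Q))
  intro k
  rw [← hconj]
  exact (hP.isHermitian.isUnitarilySimilarToDistinctDiagonal hdist).commute_conjStarAlgAut_pow u
    hPQ k
end

section
/- If a diagonal matrix P has pairwise distinct diagonal entries and U is a unitary matrix such that U*PU is also diagonal, then U is a weighted permutation matrix. -/
open Matrix

theorem unitary_conj_diag_isWeightedPerm {n : ℕ} (d : Fin n → ℂ)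
    (hd : Function.Injective d) (U : Matrix (Fin n) (Fin n) ℂ)
    (hU : Uᴴ * U = 1) (hdiag : (Uᴴ * Matrix.diagonal d * U).IsDiag) :
    IsWeightedPerm U := by
  set e : Fin n → ℂ := fun j => (Uᴴ * Matrix.diagonal d * U) j j with he
  have hE : Uᴴ * Matrix.diagonal d * U = Matrix.diagonal e := by
    ext i j
    by_cases h : i = j
    · subst h; simp [Matrix.diagonal_apply_eq, he]
    · rw [Matrix.diagonal_apply_ne _ h]; exact hdiag h
  have hUU : U * Uᴴ = 1 := mul_eq_one_comm.mp hU
  have hDU : Matrix.diagonal d * U = U * Matrix.diagonal e := by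
    have := congrArg (fun M => U * M) hE
    simp only [← Matrix.mul_assoc, hUU, Matrix.one_mul] at this
    exact this
  have key : ∀ i j, U i j ≠ 0 → d i = e j := by
    intro i j h
    have h2 := congrFun (congrFun hDU i) j
    simp only [Matrix.diagonal_mul, Matrix.mul_diagonal] at h2
    have : d i * U i j = e j * U i j := by rw [h2]; ring
    exact mul_right_cancel₀ h this
  have col : ∀ j i₁ i₂, U i₁ j ≠ 0 → U i₂ j ≠ 0 → i₁ = i₂ := by
    intro j i₁ i₂ h1 h2
    exact hd ((key i₁ j h1).trans (key i₂ j h2).symm)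
  refine ⟨?_, col⟩
  intro i j₁ j₂ h1 h2
  by_contra hne
  have hz : (Uᴴ * U) j₁ j₂ = 0 := by rw [hU]; exact Matrix.one_apply_ne hne
  rw [Matrix.mul_apply] at hz
  have hsum : ∑ k, Uᴴ j₁ k * U k j₂ = Uᴴ j₁ i * U i j₂ := by
    apply Finset.sum_eq_single
    · intro k _ hk
      have : U k j₁ = 0 := by
        by_contra hk0
        exact hk (col j₁ k i hk0 h1)
      simp [Matrix.conjTranspose_apply, this]
    · intro h; exact absurd (Finset.mem_univ i) h
  rw [hsum] at hz
  rcases mul_eq_zero.mp hz with h | h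
  · rw [Matrix.conjTranspose_apply] at h
    exact h1 (star_eq_zero.mp h)
  · exact h2 h
end

section
/- If A is unitarily equivalent to a weighted permutation, then A is the limit of a sequence of half-normal matrices each of which has pairwise distinct singular values. -/
open Matrix ComplexOrder

def UnitEquivWeightedPerm {n : ℕ} (A : Matrix (Fin n) (Fin n) ℂ) : Prop :=
  ∃ (V B : Matrix (Fin n) (Fin n) ℂ), Vᴴ * V = 1 ∧ IsWeightedPerm B ∧ A = Vᴴ * B * V

namespace Matrix.PosSemidef

/-- The old (Mathlib, December 2024) square root of a positive semidefinite matrix. -/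
noncomputable def sqrt {n 𝕜 : Type*} [Fintype n] [RCLike 𝕜] [DecidableEq n] {A : Matrix n n 𝕜}
    (hA : PosSemidef A) : Matrix n n 𝕜 :=
  hA.1.eigenvectorUnitary.1 * diagonal ((↑) ∘ (√·) ∘ hA.1.eigenvalues) *
  (star hA.1.eigenvectorUnitary : Matrix n n 𝕜)

lemma posSemidef_sqrt {n 𝕜 : Type*} [Fintype n] [RCLike 𝕜] [DecidableEq n] {A : Matrix n n 𝕜}
    (hA : PosSemidef A) : PosSemidef hA.sqrt := by
  apply PosSemidef.mul_mul_conjTranspose_same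
  refine posSemidef_diagonal_iff.mpr fun i ↦ ?_
  rw [Function.comp_apply, RCLike.nonneg_iff]
  constructor
  · simp only [RCLike.ofReal_re]
    exact Real.sqrt_nonneg _
  · simp only [RCLike.ofReal_im]

end Matrix.PosSemidef

/-- `A` has pairwise distinct singular values, i.e. the eigenvalues of
`(AᴴA)^(1/2)` are pairwise distinct. -/
def HasDistinctSingularValues {n : ℕ} (A : Matrix (Fin n) (Fin n) ℂ) : Prop :=
  Function.Injective
    (Matrix.posSemidef_conjTranspose_mul_self A).posSemidef_sqrt.isHermitian.eigenvalues

/-!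
A unitary conjugation `M ↦ Vᴴ M V` is a ⋆-algebra automorphism, so it preserves half-normality and
the spectrum of `MᴴM`, whose cardinality decides whether the singular values are distinct. This
reduces the problem to a weighted permutation `diagonal w * P_σ`. For it, `BBᴴ` is the diagonal
matrix of the `‖w i‖ ^ 2` and `BᴴB` is the same diagonal matrix permuted by `σ`, so `B` is
half-normal and its singular values are the `‖w i‖`. Moving the moduli to `‖w i‖ + t * a i` with
`a` injective, while keeping the phases, makes them pairwise distinct for all small `t > 0`.
-/

open Filter Topology Function

def IsHalfNormal {R : Type*} [Mul R] [Star R] (a : R) : Prop :=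
  Commute (star a * a) (a * star a)

theorem IsHalfNormal.map {R S F : Type*} [Mul R] [Star R] [Mul S] [Star S] [FunLike F R S]
    [MulHomClass F R S] [StarHomClass F R S] {a : R} (ha : IsHalfNormal a) (f : F) :
    IsHalfNormal (f a) := by
  simpa only [IsHalfNormal, map_mul, map_star] using Commute.map ha f

namespace Matrix

open Equiv

variable {ι 𝕜 R : Type*} [Fintype ι] [DecidableEq ι] [RCLike 𝕜]

theorem IsHermitian.injective_eigenvalues_iff {A : Matrix ι ι 𝕜} (hA : A.IsHermitian) :
    Injective hA.eigenvalues ↔ (spectrum ℝ A).ncard = Fintype.card ι := by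
  rw [hA.spectrum_real_eq_range_eigenvalues, ← Set.image_univ, ← Nat.card_eq_fintype_card,
    ← Set.ncard_univ, Set.ncard_image_iff, Set.injOn_univ]

theorem PosSemidef.sqrt_eq_cfc {A : Matrix ι ι 𝕜} (hA : A.PosSemidef) :
    hA.sqrt = cfc Real.sqrt A := by
  rw [hA.1.cfc_eq]
  rfl

theorem PosSemidef.ncard_spectrum_sqrt {A : Matrix ι ι 𝕜} (hA : A.PosSemidef) :
    (spectrum ℝ hA.sqrt).ncard = (spectrum ℝ A).ncard := by
  rw [hA.sqrt_eq_cfc, cfc_map_spectrum Real.sqrt A hA.1.isSelfAdjoint]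
  refine Set.InjOn.ncard_image fun x hx y hy hxy => ?_
  rw [hA.1.spectrum_real_eq_range_eigenvalues] at hx hy
  obtain ⟨i, rfl⟩ := hx
  obtain ⟨j, rfl⟩ := hy
  exact (Real.sqrt_inj (hA.eigenvalues_nonneg i) (hA.eigenvalues_nonneg j)).mp hxy

theorem spectrum_real_diagonal_ofReal (c : ι → ℝ) :
    spectrum ℝ (diagonal fun i => (c i : ℂ)) = Set.range c := by
  rw [← spectrum.preimage_algebraMap ℂ, spectrum_diagonal]
  ext x
  simp

theorem permMatrix_mem_unitaryGroup [CommRing R] [StarRing R] (σ : Perm ι) :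
    σ.permMatrix R ∈ unitaryGroup ι R := by
  rw [mem_unitaryGroup_iff', star_eq_conjTranspose, conjTranspose_permMatrix, ← permMatrix_mul,
    mul_inv_cancel, permMatrix_one]

theorem permMatrix_inv_mul_diagonal_mul_permMatrix [NonAssocSemiring R] (σ : Perm ι) (d : ι → R) :
    σ⁻¹.permMatrix R * diagonal d * σ.permMatrix R = diagonal (d ∘ σ.symm) := by
  rw [PEquiv.toMatrix_toPEquiv_mul, PEquiv.mul_toMatrix_toPEquiv, submatrix_submatrix]
  exact submatrix_diagonal_equiv d σ.symm

theorem diagonal_mul_permMatrix_mul_conjTranspose (σ : Perm ι) (v : ι → ℂ) :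
    diagonal v * σ.permMatrix ℂ * (diagonal v * σ.permMatrix ℂ)ᴴ =
      diagonal fun i => (‖v i‖ ^ 2 : ℂ) := by
  have hP : σ.permMatrix ℂ * (σ.permMatrix ℂ)ᴴ = 1 :=
    mem_unitaryGroup_iff.mp (permMatrix_mem_unitaryGroup σ)
  rw [conjTranspose_mul, Matrix.mul_assoc, ← Matrix.mul_assoc (σ.permMatrix ℂ), hP,
    Matrix.one_mul, diagonal_conjTranspose, diagonal_mul_diagonal]
  simp [Complex.mul_conj']

theorem conjTranspose_mul_diagonal_mul_permMatrix (σ : Perm ι) (v : ι → ℂ) :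
    (diagonal v * σ.permMatrix ℂ)ᴴ * (diagonal v * σ.permMatrix ℂ) =
      σ⁻¹.permMatrix ℂ * diagonal (fun i => (‖v i‖ ^ 2 : ℂ)) * σ.permMatrix ℂ := by
  rw [conjTranspose_mul, conjTranspose_permMatrix, diagonal_conjTranspose, Matrix.mul_assoc,
    ← Matrix.mul_assoc _ (diagonal v), diagonal_mul_diagonal, ← Matrix.mul_assoc]
  simp [Complex.conj_mul']

theorem isHalfNormal_diagonal_mul_permMatrix (σ : Perm ι) (v : ι → ℂ) :
    IsHalfNormal (diagonal v * σ.permMatrix ℂ) := by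
  rw [IsHalfNormal, star_eq_conjTranspose, conjTranspose_mul_diagonal_mul_permMatrix,
    permMatrix_inv_mul_diagonal_mul_permMatrix, diagonal_mul_permMatrix_mul_conjTranspose]
  exact commute_diagonal _ _

end Matrix

theorem hasDistinctSingularValues_iff {n : ℕ} (A : Matrix (Fin n) (Fin n) ℂ) :
    HasDistinctSingularValues A ↔ (spectrum ℝ (Aᴴ * A)).ncard = n := by
  rw [HasDistinctSingularValues, Matrix.IsHermitian.injective_eigenvalues_iff,
    Matrix.PosSemidef.ncard_spectrum_sqrt, Fintype.card_fin]

theorem HasDistinctSingularValues.map {n : ℕ} {A : Matrix (Fin n) (Fin n) ℂ}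
    (hA : HasDistinctSingularValues A)
    (f : Matrix (Fin n) (Fin n) ℂ ≃⋆ₐ[ℝ] Matrix (Fin n) (Fin n) ℂ) :
    HasDistinctSingularValues (f A) := by
  rw [hasDistinctSingularValues_iff] at hA ⊢
  rwa [← star_eq_conjTranspose, ← map_star, ← map_mul, AlgEquiv.spectrum_eq]

theorem hasDistinctSingularValues_diagonal_mul_permMatrix {n : ℕ} (σ : Equiv.Perm (Fin n))
    {v : Fin n → ℂ} (hv : Injective fun i => ‖v i‖) :
    HasDistinctSingularValues (diagonal v * σ.permMatrix ℂ) := by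
  have hsq : Injective fun i => ‖v (σ.symm i)‖ ^ 2 := fun i j hij =>
    σ.symm.injective (hv ((pow_left_inj₀ (norm_nonneg _) (norm_nonneg _) two_ne_zero).mp hij))
  rw [hasDistinctSingularValues_iff, conjTranspose_mul_diagonal_mul_permMatrix,
    permMatrix_inv_mul_diagonal_mul_permMatrix]
  have hspec := spectrum_real_diagonal_ofReal fun i => ‖v (σ.symm i)‖ ^ 2
  push_cast at hspec
  rw [Function.comp_def, hspec, Set.ncard_range_of_injective hsq, Nat.card_fin]

theorem IsWeightedPerm.exists_perm {n : ℕ} {B : Matrix (Fin n) (Fin n) ℂ} (hB : IsWeightedPerm B) :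
    ∃ σ : Equiv.Perm (Fin n), ∀ i j, B i j ≠ 0 → j = σ i := by
  classical
  let f : {i // ∃ j, B i j ≠ 0} → {j // ∃ i, B i j ≠ 0} := fun i =>
    ⟨i.2.choose, i, i.2.choose_spec⟩
  have hf : ∀ i j (hij : B i j ≠ 0), j = f ⟨i, j, hij⟩ := fun i j hij =>
    hB.1 i j _ hij (Exists.choose_spec (⟨j, hij⟩ : ∃ k, B i k ≠ 0))
  have hf_inj : Injective f := fun i i' h => Subtype.ext <|
    hB.2 (f i) i i' i.2.choose_spec (h ▸ i'.2.choose_spec)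
  have hf_surj : Surjective f := fun ⟨j, i, hij⟩ => ⟨⟨i, j, hij⟩, Subtype.ext (hf i j hij).symm⟩
  let e := Equiv.ofBijective f ⟨hf_inj, hf_surj⟩
  refine ⟨e.extendSubtype, fun i j hij => ?_⟩
  rw [e.extendSubtype_apply_of_mem i ⟨j, hij⟩]
  exact hf i j hij

theorem IsWeightedPerm.exists_eq_diagonal_mul_permMatrix {n : ℕ} {B : Matrix (Fin n) (Fin n) ℂ}
    (hB : IsWeightedPerm B) :
    ∃ (σ : Equiv.Perm (Fin n)) (w : Fin n → ℂ), B = diagonal w * σ.permMatrix ℂ := by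
  obtain ⟨σ, hσ⟩ := hB.exists_perm
  refine ⟨σ, fun i => B i (σ i), ?_⟩
  ext i j
  by_cases hj : j = σ i
  · simp [hj]
  · simp [PEquiv.toMatrix_apply, Ne.symm hj, not_imp_comm.mp (hσ i j) hj]

theorem eventually_injective_add_mul {ι : Type*} [Finite ι] (ρ a : ι → ℝ) (ha : Injective a) :
    ∀ᶠ t in 𝓝[≠] (0 : ℝ), Injective fun i => ρ i + t * a i := by
  -- a collision `ρ i + t * a i = ρ j + t * a j` with `i ≠ j` pins `t` down to one value
  have hbad : (Set.range fun p : ι × ι => (ρ p.2 - ρ p.1) / (a p.1 - a p.2)).Finite :=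
    Set.finite_range _
  filter_upwards [nhdsNE_le_cofinite 0 hbad.eventually_cofinite_notMem] with t ht i j hij
  by_contra hne
  refine ht ⟨(i, j), ?_⟩
  rw [div_eq_iff (sub_ne_zero.mpr (ha.ne hne))]
  linarith

theorem dense_setOf_injective_norm {ι : Type*} [Finite ι] :
    Dense {v : ι → ℂ | Injective fun i => ‖v i‖} := by
  intro w
  obtain ⟨a, ha⟩ := exists_injective_nat ι
  let v : ℝ → ι → ℂ := fun t i =>
    ((‖w i‖ + t * a i : ℝ) : ℂ) * Complex.exp (Complex.arg (w i) * Complex.I)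
  have hv : Continuous v := by fun_prop
  have hv₀ : v 0 = w := by
    ext i
    simp [v, Complex.norm_mul_exp_arg_mul_I]
  have hv_norm : ∀ t, 0 ≤ t → ∀ i, ‖v t i‖ = ‖w i‖ + t * a i := fun t ht i => by
    rw [norm_mul, Complex.norm_exp_ofReal_mul_I, mul_one, Complex.norm_real,
      Real.norm_of_nonneg (by positivity)]
  refine mem_closure_of_tendsto
    (hv₀ ▸ (hv.tendsto 0).mono_left (nhdsWithin_le_nhds (s := Set.Ioi 0))) ?_
  filter_upwards [self_mem_nhdsWithin,
    nhdsWithin_mono _ (fun t ht => ne_of_gt ht)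
      (eventually_injective_add_mul (‖w ·‖) _ (Nat.cast_injective.comp ha))] with t ht hinj
  simpa [hv_norm t (le_of_lt ht)] using hinj

theorem unitEquivWeightedPerm_limit_distinct {n : ℕ}
    (A : Matrix (Fin n) (Fin n) ℂ) (hA : UnitEquivWeightedPerm A) :
    ∃ B : ℕ → Matrix (Fin n) (Fin n) ℂ,
      (∀ m, Commute ((B m)ᴴ * B m) (B m * (B m)ᴴ) ∧ HasDistinctSingularValues (B m)) ∧
      Filter.Tendsto B Filter.atTop (nhds A) := by
  obtain ⟨V, B, hV, hB, rfl⟩ := hA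
  obtain ⟨σ, w, rfl⟩ := hB.exists_eq_diagonal_mul_permMatrix
  let U : unitary (Matrix (Fin n) (Fin n) ℂ) := ⟨V, mem_unitaryGroup_iff'.mpr hV⟩
  let φ := Unitary.conjStarAlgAut ℝ _ (star U)
  have hφ : ∀ M, φ M = Vᴴ * M * V := Unitary.conjStarAlgAut_star_apply U
  let f : (Fin n → ℂ) → Matrix (Fin n) (Fin n) ℂ := fun v => φ (diagonal v * σ.permMatrix ℂ)
  have hf : Continuous f := by
    simp only [f, hφ]
    fun_prop
  obtain ⟨v, hv, hvw⟩ := mem_closure_iff_seq_limit.mp (dense_setOf_injective_norm w)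
  refine ⟨f ∘ v, fun m => ⟨(isHalfNormal_diagonal_mul_permMatrix σ (v m)).map φ,
    (hasDistinctSingularValues_diagonal_mul_permMatrix σ (hv m)).map φ⟩, ?_⟩
  rw [← hφ]
  exact (hf.tendsto w).comp hvw
end

section
/- If A has a polar decomposition A = PU with P positive semidefinite and U unitary such that (U*)^k P U^k commutes with P for every k ∈ ℕ, then A is unitarily equivalent to a weighted permutation matrix. -/
open Matrix ComplexOrder

/-!
Write `Pₖ = U⁻ᵏ P Uᵏ`. These self-adjoint operators commute pairwise and satisfy
`Pₖ U = U Pₖ₊₁`, so `U` maps the joint eigenspace of the `Pₖ` for an eigenvalue sequence `α`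
into the one for the shifted sequence `k ↦ α (k + 1)`. Only finitely many joint eigenspaces are
nonzero, so the eigenvalue sequence of a joint eigenvector is eventually periodic. If `μ` is
periodic with minimal period `m`, then `Uᵐ` preserves the joint eigenspace of `μ`, and an
eigenvector `e` of `Uᵐ` there spans an orthonormal cycle `e, U e, …, Uᵐ⁻¹ e` (its members have
distinct eigenvalue sequences) on which `P U` acts as a weighted cyclic permutation. The span of
the cycle and its orthogonal complement both reduce `U` and every `Pₖ`, so induction on the
dimension yields an orthonormal basis that `P U` permutes up to scalars; in that basis the matrix
of `P U` is a weighted permutation matrix.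
-/

open Module Module.End Submodule Function
open scoped InnerProductSpace

section StarMonoid

variable {R : Type*} [Monoid R] [StarMul R]

def conjPow (U P : R) (k : ℕ) : R := star U ^ k * P * U ^ k

@[simp] lemma conjPow_zero (U P : R) : conjPow U P 0 = P := by simp [conjPow]

lemma conjPow_add (U P : R) (i k : ℕ) :
    conjPow U P (i + k) = star (U ^ i) * conjPow U P k * U ^ i := by
  rw [conjPow, conjPow, star_pow, pow_add (star U) i k, add_comm i k, pow_add U k i]
  simp only [mul_assoc]

lemma conjPow_mul {U : R} (hU : U * star U = 1) (P : R) (k : ℕ) :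
    conjPow U P k * U = U * conjPow U P (k + 1) :=
  calc conjPow U P k * U = U * star U * conjPow U P k * U := by rw [hU, one_mul]
    _ = U * conjPow U P (k + 1) := by
      rw [conjPow, conjPow, pow_succ' (star U), pow_succ U]
      simp only [mul_assoc]

lemma IsSelfAdjoint.conjPow {P : R} (hP : IsSelfAdjoint P) (U : R) (k : ℕ) :
    IsSelfAdjoint (conjPow U P k) := by
  simpa [_root_.conjPow, star_pow] using hP.conjugate' (U ^ k)

lemma Commute.star_mul_mul_of_mem_unitary {a b u : R} (h : Commute a b) (hu : u ∈ unitary R) :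
    Commute (star u * a * u) (star u * b * u) := by
  have hmul (x y : R) : star u * x * u * (star u * y * u) = star u * (x * y) * u := by
    rw [show star u * x * u * (star u * y * u) = star u * x * (u * star u) * y * u by
      simp only [mul_assoc], Unitary.mul_star_self_of_mem hu, mul_one, mul_assoc (star u) x y]
  rw [commute_iff_eq, hmul, hmul, h.eq]

lemma commute_conjPow {U P : R} (hU : U ∈ unitary R) (hcomm : ∀ k, Commute (conjPow U P k) P)
    (i j : ℕ) : Commute (conjPow U P i) (conjPow U P j) := by
  wlog hij : i ≤ j generalizing i j
  · exact (this j i (le_of_not_ge hij)).symm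
  obtain ⟨k, rfl⟩ := Nat.exists_eq_add_of_le hij
  have hi : conjPow U P i = star (U ^ i) * P * U ^ i := by simpa using conjPow_add U P i 0
  rw [hi, conjPow_add]
  exact (hcomm k).symm.star_mul_mul_of_mem_unitary (pow_mem hU i)

end StarMonoid

def seqShift {α : Type*} (a : ℕ → α) : ℕ → α := fun k => a (k + 1)

section Semiring

variable {R M ι : Type*} [Semiring R] [AddCommMonoid M] [Module R M]

lemma Module.End.invtSubmodule.pow_mem {f : End R M} {p : Submodule R M}
    (hp : p ∈ f.invtSubmodule) (j : ℕ) : p ∈ (f ^ j).invtSubmodule := by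
  rw [mem_invtSubmodule_iff_mapsTo, coe_pow]
  exact ((mem_invtSubmodule_iff_mapsTo f).mp hp).iterate j

lemma Module.End.span_range_mem_invtSubmodule {f : End R M} {v : ι → M}
    (h : ∀ i, f (v i) ∈ span R (Set.range v)) : span R (Set.range v) ∈ f.invtSubmodule :=
  (mem_invtSubmodule f).mpr (span_le.mpr (Set.range_subset_iff.mpr h))

lemma Module.End.apply_pow_apply_eq_smul_pow_finRotate {U : End R M} {m : ℕ} {e : M} {c : R}
    (he : (U ^ m) e = c • e) (j : Fin m) :
    U ((U ^ (j : ℕ)) e) = (if (j : ℕ) + 1 = m then c else 1) • (U ^ (finRotate m j : ℕ)) e := by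
  obtain ⟨m, rfl⟩ : ∃ k, m = k + 1 := ⟨m - 1, by have := j.pos; omega⟩
  rw [← End.mul_apply, ← pow_succ', coe_finRotate]
  by_cases hj : j = Fin.last m
  · subst hj
    simp [he]
  · have : (j : ℕ) + 1 ≠ m + 1 := fun h => hj (Fin.ext (by simp; omega))
    rw [if_neg hj, if_neg this, one_smul]

end Semiring

section CommRing

variable {R M ι : Type*} [CommRing R] [AddCommGroup M] [Module R M]

abbrev jointEigenspace (T : ι → End R M) (α : ι → R) : Submodule R M :=
  ⨅ i, eigenspace (T i) (α i)

lemma mem_jointEigenspace {T : ι → End R M} {α : ι → R} {x : M} :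
    x ∈ jointEigenspace T α ↔ ∀ i, T i x = α i • x := by
  simp [Submodule.mem_iInf]

lemma Module.End.eigenspace_mem_invtSubmodule_of_commute {f g : End R M} (h : Commute f g)
    (c : R) : f.eigenspace c ∈ g.invtSubmodule :=
  (mem_invtSubmodule_iff_mapsTo g).mpr (mapsTo_genEigenspace_of_comm h c 1)

end CommRing

section AlgClosed

variable {K V ι : Type*} [Field K] [IsAlgClosed K] [AddCommGroup V] [Module K V]
  [FiniteDimensional K V]

lemma Module.End.exists_inf_eigenspace_ne_bot {f : End K V} {W : Submodule K V} (hW : W ≠ ⊥)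
    (hWf : W ∈ f.invtSubmodule) : ∃ c, W ⊓ f.eigenspace c ≠ ⊥ := by
  have : Nontrivial W := Submodule.nontrivial_iff_ne_bot.mpr hW
  obtain ⟨c, hc⟩ :=
    exists_eigenvalue (f.restrict ((mem_invtSubmodule_iff_forall_mem_of_mem f).mp hWf))
  obtain ⟨⟨x, hxW⟩, hx, hx0⟩ := hc.exists_hasEigenvector
  refine ⟨c, (Submodule.ne_bot_iff _).mpr ⟨x, ⟨hxW, ?_⟩, by simpa using hx0⟩⟩
  exact mem_eigenspace_iff.mpr (congrArg Subtype.val (mem_eigenspace_iff.mp hx))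

lemma Module.End.exists_inf_jointEigenspace_ne_bot {T : ι → End K V}
    (hT : ∀ i j, Commute (T i) (T j)) {W : Submodule K V} (hW : W ≠ ⊥)
    (hWT : ∀ i, W ∈ (T i).invtSubmodule) : ∃ α : ι → K, W ⊓ jointEigenspace T α ≠ ⊥ := by
  obtain ⟨d, hd⟩ : ∃ d, finrank K W = d := ⟨_, rfl⟩
  induction d using Nat.strong_induction_on generalizing W with
  | _ d ih =>
  by_cases hscalar : ∀ i, ∃ c, W ≤ (T i).eigenspace c
  · choose α hα using hscalar
    exact ⟨α, by rwa [inf_eq_left.mpr (le_iInf hα)]⟩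
  push Not at hscalar
  obtain ⟨i, hi⟩ := hscalar
  obtain ⟨c, hc⟩ := exists_inf_eigenspace_ne_bot hW (hWT i)
  have hlt : finrank K ↥(W ⊓ (T i).eigenspace c) < d :=
    hd ▸ Submodule.finrank_lt_finrank_of_lt
      (lt_of_le_of_ne inf_le_left fun h => hi c (h ▸ inf_le_right))
  obtain ⟨α, hα⟩ := ih _ hlt hc
    (fun j => invtSubmodule.inf_mem (hWT j) (eigenspace_mem_invtSubmodule_of_commute (hT i j) c))
    rfl
  exact ⟨α, ne_bot_of_le_ne_bot hα (inf_le_inf_right _ inf_le_left)⟩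

end AlgClosed

section InnerProduct

variable {𝕜 E : Type*} [RCLike 𝕜] [NormedAddCommGroup E] [InnerProductSpace 𝕜 E]

lemma Orthonormal.sumElim {ι ι' : Type*} {v : ι → E} {v' : ι' → E} (hv : Orthonormal 𝕜 v)
    (hv' : Orthonormal 𝕜 v') (h : ∀ i j, ⟪v i, v' j⟫_𝕜 = 0) : Orthonormal 𝕜 (Sum.elim v v') := by
  refine ⟨fun i => ?_, fun i j hij => ?_⟩
  · rcases i with i | i
    exacts [hv.1 i, hv'.1 i]
  · rcases i with i | i <;> rcases j with j | j
    · exact hv.2 fun h => hij (congrArg _ h)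
    · exact h i j
    · exact inner_eq_zero_symm.mp (h j i)
    · exact hv'.2 fun h => hij (congrArg _ h)

lemma orthogonal_mem_invtSubmodule_of_inner_map_map {U : End 𝕜 E}
    (hU : ∀ x y, ⟪U x, U y⟫_𝕜 = ⟪x, y⟫_𝕜) {S : Submodule 𝕜 E} [FiniteDimensional 𝕜 S]
    (hS : S ∈ U.invtSubmodule) : Sᗮ ∈ U.invtSubmodule := by
  have hSU := (mem_invtSubmodule_iff_forall_mem_of_mem U).mp hS
  have hsurj : Surjective (U.restrict hSU) := LinearMap.injective_iff_surjective.mp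
    fun x y hxy => Subtype.ext ((U.isometryOfInner hU).injective (congrArg Subtype.val hxy))
  refine (mem_invtSubmodule_iff_forall_mem_of_mem U).mpr fun x hx => ?_
  refine (mem_orthogonal _ _).mpr fun s hs => ?_
  obtain ⟨⟨t, ht⟩, hts⟩ := hsurj ⟨s, hs⟩
  have hUt : U t = s := congrArg Subtype.val hts
  rw [← hUt]
  exact (hU t x).trans ((mem_orthogonal _ _).mp hx t ht)

variable [FiniteDimensional 𝕜 E] {P U : End 𝕜 E}

lemma Module.End.inner_map_map_of_mem_unitary (hU : U ∈ unitary (End 𝕜 E)) (x y : E) :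
    ⟪U x, U y⟫_𝕜 = ⟪x, y⟫_𝕜 := by
  rw [← LinearMap.adjoint_inner_right, ← LinearMap.star_eq_adjoint, ← End.mul_apply,
    Unitary.star_mul_self_of_mem hU, one_apply]

lemma Module.End.norm_map_of_mem_unitary (hU : U ∈ unitary (End 𝕜 E)) (x : E) : ‖U x‖ = ‖x‖ :=
  (U.isometryOfInner (inner_map_map_of_mem_unitary hU)).norm_map x

lemma isSymmetric_conjPow (hP : IsSelfAdjoint P) (k : ℕ) : (conjPow U P k).IsSymmetric :=
  (LinearMap.isSymmetric_iff_isSelfAdjoint _).mpr (hP.conjPow U k)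

lemma pow_apply_mem_jointEigenspace_conjPow (hU : U * star U = 1) {α : ℕ → 𝕜} {x : E}
    (hx : x ∈ jointEigenspace (conjPow U P) α) (j : ℕ) :
    (U ^ j) x ∈ jointEigenspace (conjPow U P) (seqShift^[j] α) := by
  induction j with
  | zero => simpa using hx
  | succ j ih =>
    rw [mem_jointEigenspace] at ih ⊢
    intro k
    rw [pow_succ', End.mul_apply, iterate_succ_apply', ← End.mul_apply (conjPow U P k),
      conjPow_mul hU, End.mul_apply, ih, map_smul]
    rfl

lemma orthonormal_pow_apply_of_mem_jointEigenspace (hP : IsSelfAdjoint P)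
    (hU : U ∈ unitary (End 𝕜 E)) {μ : ℕ → 𝕜} {e : E} (he : e ∈ jointEigenspace (conjPow U P) μ)
    (he1 : ‖e‖ = 1) :
    Orthonormal 𝕜 (fun j : Fin (minimalPeriod seqShift μ) => (U ^ (j : ℕ)) e) := by
  refine ⟨fun j => by rw [norm_map_of_mem_unitary (pow_mem hU _), he1], fun i j hij => ?_⟩
  have hne : seqShift^[(i : ℕ)] μ ≠ seqShift^[(j : ℕ)] μ :=
    fun h => hij (Fin.ext (iterate_injOn_Iio_minimalPeriod i.2 j.2 h))
  have hU' := Unitary.mul_star_self_of_mem hU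
  exact LinearMap.IsSymmetric.orthogonalFamily_iInf_eigenspaces (isSymmetric_conjPow hP) hne
    ⟨_, pow_apply_mem_jointEigenspace_conjPow hU' he i⟩
    ⟨_, pow_apply_mem_jointEigenspace_conjPow hU' he j⟩

end InnerProduct

section Complex

variable {E : Type*} [NormedAddCommGroup E] [InnerProductSpace ℂ E] [FiniteDimensional ℂ E]
  {P U : End ℂ E}

lemma exists_mem_periodicPts_inf_jointEigenspace_ne_bot (hP : IsSelfAdjoint P)
    (hU : U ∈ unitary (End ℂ E)) (hcomm : ∀ k, Commute (conjPow U P k) P)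
    {W : Submodule ℂ E} (hW : W ≠ ⊥) (hWU : W ∈ U.invtSubmodule)
    (hWP : ∀ k, W ∈ (conjPow U P k).invtSubmodule) :
    ∃ μ ∈ periodicPts seqShift, W ⊓ jointEigenspace (conjPow U P) μ ≠ ⊥ := by
  obtain ⟨α, hα⟩ := exists_inf_jointEigenspace_ne_bot (commute_conjPow hU hcomm) hW hWP
  obtain ⟨x, ⟨hxW, hxα⟩, hx0⟩ := (Submodule.ne_bot_iff _).mp hα
  have hne (j : ℕ) : W ⊓ jointEigenspace (conjPow U P) (seqShift^[j] α) ≠ ⊥ := by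
    refine (Submodule.ne_bot_iff _).mpr ⟨(U ^ j) x, ⟨invtSubmodule.pow_mem hWU j hxW,
      pow_apply_mem_jointEigenspace_conjPow (Unitary.mul_star_self_of_mem hU) hxα j⟩, ?_⟩
    rw [← norm_ne_zero_iff, norm_map_of_mem_unitary (pow_mem hU j)]
    exact norm_ne_zero_iff.mpr hx0
  have hfin : {β : ℕ → ℂ | jointEigenspace (conjPow U P) β ≠ ⊥}.Finite :=
    Submodule.finite_ne_bot_of_iSupIndep
      (LinearMap.IsSymmetric.orthogonalFamily_iInf_eigenspaces (isSymmetric_conjPow hP)).independent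
  obtain ⟨a, b, hab, hba⟩ := hfin.exists_lt_map_eq_of_forall_mem (f := fun j => seqShift^[j] α)
    fun j => ne_bot_of_le_ne_bot (hne j) inf_le_right
  refine ⟨seqShift^[a] α, mk_mem_periodicPts (Nat.sub_pos_of_lt hab) ?_, hne a⟩
  change seqShift^[b - a] (seqShift^[a] α) = seqShift^[a] α
  rw [← iterate_add_apply, Nat.sub_add_cancel hab.le]
  exact hba.symm

lemma exists_unit_eigenvector_pow_minimalPeriod (hU : U * star U = 1) {W : Submodule ℂ E}
    (hWU : W ∈ U.invtSubmodule) {μ : ℕ → ℂ} (hμ : W ⊓ jointEigenspace (conjPow U P) μ ≠ ⊥) :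
    ∃ e ∈ W ⊓ jointEigenspace (conjPow U P) μ, ‖e‖ = 1 ∧
      ∃ c : ℂ, (U ^ minimalPeriod seqShift μ) e = c • e := by
  have hG : W ⊓ jointEigenspace (conjPow U P) μ ∈ (U ^ minimalPeriod seqShift μ).invtSubmodule :=
    (mem_invtSubmodule_iff_forall_mem_of_mem _).mpr fun x ⟨hxW, hxμ⟩ =>
      ⟨invtSubmodule.pow_mem hWU _ hxW, by
        have h := pow_apply_mem_jointEigenspace_conjPow hU hxμ (minimalPeriod seqShift μ)
        rwa [(isPeriodicPt_minimalPeriod seqShift μ).eq] at h⟩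
  obtain ⟨c, hc⟩ := exists_inf_eigenspace_ne_bot hμ hG
  obtain ⟨x, ⟨hxG, hxc⟩, hx0⟩ := (Submodule.ne_bot_iff _).mp hc
  refine ⟨(‖x‖⁻¹ : ℂ) • x, Submodule.smul_mem _ _ hxG, norm_smul_inv_norm hx0, c, ?_⟩
  rw [map_smul, mem_eigenspace_iff.mp hxc, smul_comm]

theorem exists_orthonormal_cycle (hP : IsSelfAdjoint P) (hU : U ∈ unitary (End ℂ E))
    (hcomm : ∀ k, Commute (conjPow U P k) P) {W : Submodule ℂ E} (hW : W ≠ ⊥)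
    (hWU : W ∈ U.invtSubmodule) (hWP : ∀ k, W ∈ (conjPow U P k).invtSubmodule) :
    ∃ (m : ℕ) (f : Fin m → E) (w : Fin m → ℂ), 0 < m ∧ Orthonormal ℂ f ∧
      span ℂ (Set.range f) ≤ W ∧ span ℂ (Set.range f) ∈ U.invtSubmodule ∧
      (∀ k, span ℂ (Set.range f) ∈ (conjPow U P k).invtSubmodule) ∧
      ∀ j, (P * U) (f j) = w j • f (finRotate m j) := by
  have hU' := Unitary.mul_star_self_of_mem hU
  obtain ⟨μ, hμ, hWμ⟩ := exists_mem_periodicPts_inf_jointEigenspace_ne_bot hP hU hcomm hW hWU hWP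
  obtain ⟨e, ⟨heW, heμ⟩, he1, c, hc⟩ := exists_unit_eigenvector_pow_minimalPeriod hU' hWU hWμ
  set m := minimalPeriod seqShift μ
  have hPf (j k : ℕ) : conjPow U P k ((U ^ j) e) = seqShift^[j] μ k • (U ^ j) e :=
    mem_jointEigenspace.mp (pow_apply_mem_jointEigenspace_conjPow hU' heμ j) k
  have hUf := apply_pow_apply_eq_smul_pow_finRotate hc
  have hmem (j : Fin m) : (U ^ (j : ℕ)) e ∈ span ℂ (Set.range fun j : Fin m => (U ^ (j : ℕ)) e) :=
    subset_span ⟨j, rfl⟩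
  refine ⟨m, fun j => (U ^ (j : ℕ)) e,
    fun j => (if (j : ℕ) + 1 = m then c else 1) * seqShift^[finRotate m j] μ 0,
    minimalPeriod_pos_of_mem_periodicPts hμ,
    orthonormal_pow_apply_of_mem_jointEigenspace hP hU heμ he1,
    span_le.mpr (Set.range_subset_iff.mpr fun j => invtSubmodule.pow_mem hWU _ heW),
    span_range_mem_invtSubmodule fun j => ?_,
    fun k => span_range_mem_invtSubmodule fun j => ?_, fun j => ?_⟩
  · rw [hUf j]
    exact Submodule.smul_mem _ _ (hmem _)
  · rw [hPf j k]
    exact Submodule.smul_mem _ _ (hmem j)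
  · rw [End.mul_apply, hUf j, map_smul, ← conjPow_zero U P, hPf, smul_smul]

theorem exists_orthonormal_weightedPerm_of_mem_invtSubmodule (hP : IsSelfAdjoint P)
    (hU : U ∈ unitary (End ℂ E)) (hcomm : ∀ k, Commute (conjPow U P k) P) (W : Submodule ℂ E)
    (hWU : W ∈ U.invtSubmodule) (hWP : ∀ k, W ∈ (conjPow U P k).invtSubmodule) :
    ∃ (ι : Type) (_ : Fintype ι) (v : ι → E) (g : Equiv.Perm ι) (w : ι → ℂ),
      Orthonormal ℂ v ∧ span ℂ (Set.range v) = W ∧ ∀ i, (P * U) (v i) = w i • v (g i) := by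
  obtain ⟨d, hd⟩ : ∃ d, finrank ℂ W = d := ⟨_, rfl⟩
  induction d using Nat.strong_induction_on generalizing W with
  | _ d ih =>
  rcases eq_or_ne W ⊥ with rfl | hW
  · exact ⟨Empty, inferInstance, Empty.elim, 1, Empty.elim, ⟨Empty.rec, Empty.rec⟩, by simp,
      Empty.rec⟩
  obtain ⟨m, f, w, hm, hf, hSW, hSU, hSP, hfP⟩ := exists_orthonormal_cycle hP hU hcomm hW hWU hWP
  set S := span ℂ (Set.range f)
  have hW'U : Sᗮ ⊓ W ∈ U.invtSubmodule := invtSubmodule.inf_mem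
    (orthogonal_mem_invtSubmodule_of_inner_map_map (inner_map_map_of_mem_unitary hU) hSU) hWU
  have hW'P (k : ℕ) : Sᗮ ⊓ W ∈ (conjPow U P k).invtSubmodule := invtSubmodule.inf_mem
    ((isSymmetric_conjPow hP k).orthogonalComplement_mem_invtSubmodule (hSP k)) (hWP k)
  have hlt : finrank ℂ ↥(Sᗮ ⊓ W) < d := by
    have := finrank_add_inf_finrank_orthogonal hSW
    rw [finrank_span_eq_card hf.linearIndependent, Fintype.card_fin] at this
    omega
  obtain ⟨ι, _, v, g, w', hv, hvW, hvP⟩ := ih _ hlt _ hW'U hW'P rfl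
  have hvS (j : ι) : v j ∈ Sᗮ := (hvW ▸ subset_span ⟨j, rfl⟩ : v j ∈ Sᗮ ⊓ W).1
  refine ⟨Fin m ⊕ ι, inferInstance, Sum.elim f v, Equiv.sumCongr (finRotate m) g, Sum.elim w w',
    hf.sumElim hv fun i j => (mem_orthogonal _ _).mp (hvS j) _ (subset_span ⟨i, rfl⟩), ?_, ?_⟩
  · rw [Set.Sum.elim_range, span_union, hvW, sup_orthogonal_inf_of_hasOrthogonalProjection hSW]
  · rintro (j | j)
    exacts [hfP j, hvP j]

theorem exists_orthonormalBasis_mul_apply_eq_smul (hP : IsSelfAdjoint P)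
    (hU : U ∈ unitary (End ℂ E)) (hcomm : ∀ k, Commute (conjPow U P k) P)
    (ι : Type*) [Fintype ι] (hι : Fintype.card ι = finrank ℂ E) :
    ∃ (b : OrthonormalBasis ι ℂ E) (g : Equiv.Perm ι) (w : ι → ℂ),
      ∀ i, (P * U) (b i) = w i • b (g i) := by
  obtain ⟨κ, _, v, g, w, hv, hspan, hvP⟩ := exists_orthonormal_weightedPerm_of_mem_invtSubmodule
    hP hU hcomm ⊤ (invtSubmodule.top_mem U) fun _ => invtSubmodule.top_mem _
  let b := OrthonormalBasis.mk hv hspan.ge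
  let σ : κ ≃ ι := Fintype.equivOfCardEq (by rw [hι, finrank_eq_card_basis b.toBasis])
  refine ⟨b.reindex σ, σ.permCongr g, w ∘ σ.symm, fun i => ?_⟩
  simpa [b, Equiv.permCongr_apply] using hvP (σ.symm i)

end Complex

section Matrices

lemma LinearMap.toMatrixOrthonormal_eq_conjTranspose_mul_mul {𝕜 E ι : Type*} [RCLike 𝕜]
    [NormedAddCommGroup E] [InnerProductSpace 𝕜 E] [FiniteDimensional 𝕜 E] [Fintype ι]
    [DecidableEq ι] (b₁ b₂ : OrthonormalBasis ι 𝕜 E) (f : E →ₗ[𝕜] E) :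
    toMatrixOrthonormal b₁ f =
      (b₂.toBasis.toMatrix b₁)ᴴ * toMatrixOrthonormal b₂ f * b₂.toBasis.toMatrix b₁ := by
  change toMatrix b₁.toBasis b₁.toBasis f =
    (b₂.toBasis.toMatrix b₁)ᴴ * toMatrix b₂.toBasis b₂.toBasis f * b₂.toBasis.toMatrix b₁
  rw [← basis_toMatrix_mul_linearMap_toMatrix_mul_basis_toMatrix b₁.toBasis b₂.toBasis b₁.toBasis
    b₂.toBasis]
  congr 2
  ext i j
  simp [Basis.toMatrix_apply, OrthonormalBasis.repr_apply_apply]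

lemma isWeightedPerm_of_apply_ne_zero {n : ℕ} {B : Matrix (Fin n) (Fin n) ℂ} {g : Fin n → Fin n}
    (hg : Injective g) (hB : ∀ i j, B i j ≠ 0 → i = g j) : IsWeightedPerm B :=
  ⟨fun _ _ _ h₁ h₂ => hg ((hB _ _ h₁).symm.trans (hB _ _ h₂)),
    fun _ _ _ h₁ h₂ => (hB _ _ h₁).trans (hB _ _ h₂).symm⟩

lemma isWeightedPerm_toMatrixOrthonormal {E : Type*} [NormedAddCommGroup E]
    [InnerProductSpace ℂ E] [FiniteDimensional ℂ E] {n : ℕ} (b : OrthonormalBasis (Fin n) ℂ E)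
    {f : End ℂ E} {g : Fin n → Fin n} (hg : Injective g) {w : Fin n → ℂ}
    (hf : ∀ j, f (b j) = w j • b (g j)) : IsWeightedPerm (LinearMap.toMatrixOrthonormal b f) := by
  refine isWeightedPerm_of_apply_ne_zero hg fun i j hij => ?_
  by_contra hne
  rw [LinearMap.toMatrixOrthonormal_apply_apply, hf, inner_smul_right, b.orthonormal.2 hne,
    mul_zero] at hij
  exact hij rfl

end Matrices

theorem polar_commute_pow_unitEquivWeightedPerm {n : ℕ}
    (P U A : Matrix (Fin n) (Fin n) ℂ) (hP : P.PosSemidef) (hU : Uᴴ * U = 1)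
    (hA : A = P * U) (hcomm : ∀ k : ℕ, Commute ((Uᴴ) ^ k * P * U ^ k) P) :
    ∃ (V B : Matrix (Fin n) (Fin n) ℂ), Vᴴ * V = 1 ∧ IsWeightedPerm B ∧ A = Vᴴ * B * V := by
  let e := EuclideanSpace.basisFun (Fin n) ℂ
  let φ := (LinearMap.toMatrixOrthonormal e).symm
  obtain ⟨b, g, w, hb⟩ := exists_orthonormalBasis_mul_apply_eq_smul (P := φ P) (U := φ U)
    (hP.1.isSelfAdjoint.map φ) (Unitary.map_mem φ (mem_unitaryGroup_iff'.mpr hU))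
    (fun k => by
      have h := (hcomm k).map φ
      rwa [← star_eq_conjTranspose, map_mul, map_mul, map_pow, map_pow, map_star] at h)
    (Fin n) (by simp)
  refine ⟨b.toBasis.toMatrix e, LinearMap.toMatrixOrthonormal b (φ A),
    b.toMatrix_orthonormalBasis_conjTranspose_mul_self e,
    isWeightedPerm_toMatrixOrthonormal b g.injective (f := φ A) (by simpa [hA] using hb), ?_⟩
  rw [← LinearMap.toMatrixOrthonormal_eq_conjTranspose_mul_mul, StarAlgEquiv.apply_symm_apply]
end

section
/- Let U ∈ M_n(ℂ) be unitary and P ∈ M_n(ℂ) self-adjoint with P ≠ I, such that P commutes with (U*)^k P U^k for all k = 1, …, n−1. Then P commutes with (U*)^k P U^k for all k ∈ ℕ. -/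
/-! The Hermitian matrices `Q k = (U*)^k P U^k` satisfy `Q (k+1) = U* (Q k) U`, and conjugating
the hypothesis shows that `Q 0, …, Q (n-1)` pairwise commute. Commuting Hermitian matrices are
simultaneously diagonalisable, so `1, Q 0, …, Q (n-1)` span a space of dimension at most `n`.
Hence the increasing chain `V m = span {1, Q 0, …, Q (m-1)}` stabilises at some `m < n`; then
`V m` is invariant under conjugation by `U`, so it contains every `Q k`, and everything in it
commutes with `P`. -/

open Matrix Module Submodule

-- With `q i = φ^i x` and `φ a = a` these are the Krylov spaces of `φ` at `x`, enlarged by `a`.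
def krylovSpan (K : Type*) {M : Type*} [DivisionRing K] [AddCommGroup M] [Module K M] (a : M)
    (q : ℕ → M) (m : ℕ) : Submodule K M :=
  span K (insert a (q '' Set.Iio m))

section krylov

variable {K M : Type*} [DivisionRing K] [AddCommGroup M] [Module K M] {a : M} {q : ℕ → M}

instance (m : ℕ) : FiniteDimensional K (krylovSpan K a q m) :=
  FiniteDimensional.span_of_finite K (((Set.finite_Iio m).image q).insert a)

theorem krylovSpan_mono : Monotone (krylovSpan K a q) := fun _ _ h =>
  span_mono (Set.insert_subset_insert (Set.image_mono (Set.Iio_subset_Iio h)))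

theorem apply_mem_krylovSpan_succ (m : ℕ) : q m ∈ krylovSpan K a q (m + 1) :=
  subset_span (Set.mem_insert_of_mem _ ⟨m, Nat.lt_succ_self m, rfl⟩)

theorem map_krylovSpan_le {φ : M →ₗ[K] M} (ha : φ a = a) (hq : ∀ i, φ (q i) = q (i + 1))
    (m : ℕ) : (krylovSpan K a q m).map φ ≤ krylovSpan K a q (m + 1) := by
  rw [krylovSpan, map_span, span_le]
  rintro _ ⟨_, rfl | ⟨i, hi, rfl⟩, rfl⟩
  · rw [ha]
    exact subset_span (Set.mem_insert _ _)
  · exact hq i ▸ krylovSpan_mono (Nat.succ_le_succ hi) (apply_mem_krylovSpan_succ (i + 1))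

theorem mem_krylovSpan_of_succ_eq {φ : M →ₗ[K] M} (ha : φ a = a)
    (hq : ∀ i, φ (q i) = q (i + 1)) {m : ℕ} (hm : krylovSpan K a q (m + 1) = krylovSpan K a q m)
    (k : ℕ) : q k ∈ krylovSpan K a q m := by
  induction k with
  | zero => exact hm ▸ krylovSpan_mono (Nat.le_add_left 1 m) (apply_mem_krylovSpan_succ 0)
  | succ k ih =>
    rw [← hq k, ← hm]
    exact map_krylovSpan_le ha hq m (mem_map_of_mem ih)

theorem exists_krylovSpan_succ_eq (ha : a ≠ 0) {n : ℕ}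
    (hn : finrank K (krylovSpan K a q n) ≤ n) :
    ∃ m < n, krylovSpan K a q (m + 1) = krylovSpan K a q m := by
  by_contra! hne
  have hgrow : ∀ m ≤ n, m + 1 ≤ finrank K (krylovSpan K a q m) := by
    intro m
    induction m with
    | zero =>
      intro _
      exact finrank_pos_iff_exists_ne_zero.mpr
        ⟨⟨a, subset_span (Set.mem_insert a _)⟩, ne_of_apply_ne Subtype.val ha⟩
    | succ m ih =>
      intro hm
      have hlt := finrank_lt_finrank_of_lt
        ((krylovSpan_mono (Nat.le_add_right m 1)).lt_of_ne' (hne m hm))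
      have := ih (by omega)
      omega
  have := hgrow n le_rfl
  omega

theorem mem_krylovSpan_of_finrank_le {φ : M →ₗ[K] M} (ha : φ a = a) (ha₀ : a ≠ 0)
    (hq : ∀ i, φ (q i) = q (i + 1)) {n : ℕ} (hn : finrank K (krylovSpan K a q n) ≤ n) (k : ℕ) :
    q k ∈ krylovSpan K a q n := by
  obtain ⟨m, hm, hstable⟩ := exists_krylovSpan_succ_eq ha₀ hn
  exact krylovSpan_mono hm.le (mem_krylovSpan_of_succ_eq ha hq hstable k)

end krylov

theorem Module.Basis.finrank_span_le_card_of_apply_eq_smul {K E ι : Type*} [Field K]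
    [AddCommGroup E] [Module K E] [Fintype ι] [DecidableEq ι] (b : Basis ι K E)
    {S : Set (Module.End K E)} (hS : ∀ f ∈ S, ∀ j, ∃ μ : K, f (b j) = μ • b j) :
    finrank K (span K S) ≤ Fintype.card ι := by
  have : Module.Finite K E := .of_basis b
  let diag : (ι → K) →ₗ[K] Module.End K E := (toLin b b).toLinearMap ∘ₗ diagonalLinearMap ι K K
  have hS_le : span K S ≤ LinearMap.range diag := by
    refine span_le.mpr fun f hf => ?_
    choose μ hμ using hS f hf
    refine ⟨μ, b.ext fun j => ?_⟩
    simp [diag, toLin_self, diagonal_apply, ite_smul, hμ]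
  calc finrank K (span K S) ≤ finrank K (LinearMap.range diag) := Submodule.finrank_mono hS_le
    _ ≤ finrank K (ι → K) := LinearMap.finrank_range_le diag
    _ = Fintype.card ι := Module.finrank_fintype_fun_eq_card K

section

variable {𝕜 E : Type*} [RCLike 𝕜] [NormedAddCommGroup E] [InnerProductSpace 𝕜 E]
  [FiniteDimensional 𝕜 E]

theorem LinearMap.exists_basis_apply_eq_smul_of_pairwise_commute {S : Set (E →ₗ[𝕜] E)}
    (hS : ∀ T ∈ S, T.IsSymmetric) (hc : S.Pairwise Commute) :
    ∃ (s : Set E) (b : Basis s 𝕜 E), ∀ T ∈ S, ∀ j, ∃ μ : 𝕜, T (b j) = μ • b j := by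
  let s : Set E := {x | ∀ T ∈ S, ∃ μ : 𝕜, T x = μ • x}
  have hs : ⊤ ≤ span 𝕜 s := by
    rw [← LinearMap.IsSymmetric.iSup_iInf_eq_top_of_commute (T := ((↑) : S → E →ₗ[𝕜] E))
      (fun T => hS T T.2) fun T T' h => hc T.2 T'.2 (Subtype.coe_ne_coe.mpr h)]
    refine iSup_le fun χ x hx => subset_span fun T hT => ⟨χ ⟨T, hT⟩, ?_⟩
    exact Module.End.mem_eigenspace_iff.mp ((mem_iInf _).mp hx ⟨T, hT⟩)
  exact ⟨_, Basis.ofSpan hs, fun T hT j => Basis.ofSpan_subset hs ⟨j, rfl⟩ T hT⟩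

theorem LinearMap.finrank_span_insert_one_le_of_pairwise_commute {S : Set (E →ₗ[𝕜] E)}
    (hS : ∀ T ∈ S, T.IsSymmetric) (hc : S.Pairwise Commute) :
    finrank 𝕜 (span 𝕜 (insert 1 S)) ≤ finrank 𝕜 E := by
  classical
  obtain ⟨s, b, hb⟩ := exists_basis_apply_eq_smul_of_pairwise_commute hS hc
  have := FiniteDimensional.fintypeBasisIndex b
  rw [finrank_eq_card_basis b]
  refine b.finrank_span_le_card_of_apply_eq_smul ?_
  rintro T (rfl | hT) j
  · exact ⟨1, by simp⟩
  · exact hb T hT j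

end

theorem Matrix.finrank_span_insert_one_le_of_pairwise_commute {𝕜 n : Type*} [RCLike 𝕜]
    [Fintype n] [DecidableEq n] {S : Set (Matrix n n 𝕜)} (hS : ∀ A ∈ S, A.IsHermitian)
    (hc : S.Pairwise Commute) :
    finrank 𝕜 (span 𝕜 (insert 1 S)) ≤ Fintype.card n := by
  let e := toLinAlgEquiv (EuclideanSpace.basisFun n 𝕜).toBasis
  have hSe : ∀ T ∈ e '' S, T.IsSymmetric := by
    rintro _ ⟨A, hA, rfl⟩
    exact isSymmetric_toEuclideanLin_iff.mpr (hS A hA)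
  have hce : (e '' S).Pairwise Commute := by
    rintro _ ⟨A, hA, rfl⟩ _ ⟨B, hB, rfl⟩ hne
    exact (hc hA hB (ne_of_apply_ne e hne)).map e
  have hmap : (span 𝕜 (insert 1 S)).map (e.toLinearEquiv : Matrix n n 𝕜 →ₗ[𝕜] _) =
      span 𝕜 (insert 1 (e '' S)) := by
    rw [map_span, Set.image_insert_eq]
    simp
  rw [← e.toLinearEquiv.finrank_map_eq, hmap]
  exact (LinearMap.finrank_span_insert_one_le_of_pairwise_commute hSe hce).trans_eq
    (finrank_euclideanSpace)

theorem pairwise_commute_iterate {A F : Type*} [Monoid A] [FunLike F A A] [MulHomClass F A A]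
    (f : F) {x : A} {n : ℕ} (h : ∀ k < n, Commute x (f^[k] x)) :
    ((fun k => f^[k] x) '' Set.Iio n).Pairwise Commute := by
  have hshift : ∀ i d, i + d < n → Commute (f^[i] x) (f^[i + d] x) := by
    intro i d hid
    rw [Function.iterate_add_apply]
    induction i with
    | zero => exact h d (by omega)
    | succ i ih =>
      simp only [Function.iterate_succ_apply']
      exact (ih (by omega)).map f
  rintro _ ⟨i, hi, rfl⟩ _ ⟨j, hj, rfl⟩ -
  rcases le_total i j with hij | hij
  · obtain ⟨d, rfl⟩ := Nat.exists_eq_add_of_le hij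
    exact hshift i d hj
  · obtain ⟨d, rfl⟩ := Nat.exists_eq_add_of_le hij
    exact (hshift j d hi).symm

theorem commute_pow_of_commute_pow_lt_general {n : ℕ} (U P : Matrix (Fin n) (Fin n) ℂ)
    (hU : Uᴴ * U = 1) (hP : Pᴴ = P)
    (hcomm : ∀ k : ℕ, 1 ≤ k → k ≤ n - 1 → Commute P ((Uᴴ) ^ k * P * U ^ k)) :
    ∀ k : ℕ, Commute P ((Uᴴ) ^ k * P * U ^ k) := by
  rcases isEmpty_or_nonempty (Fin n) with hn | hn
  · exact fun k => Subsingleton.elim (P * _) _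
  let u : unitary (Matrix (Fin n) (Fin n) ℂ) := ⟨U, mem_unitaryGroup_iff'.mpr hU⟩
  let σ := Unitary.conjStarAlgAut ℂ (Matrix (Fin n) (Fin n) ℂ) (star u)
  let Q : ℕ → Matrix (Fin n) (Fin n) ℂ := fun k => σ^[k] P
  have hQ : ∀ k, Q k = Uᴴ ^ k * P * U ^ k := fun k => by
    simp [Q, σ, ← StarAlgEquiv.coe_pow, ← map_pow, u, star_eq_conjTranspose]
  have hPQ : ∀ k < n, Commute P (Q k) := by
    rintro (_ | k) hk
    · exact .refl P
    · exact hQ _ ▸ hcomm (k + 1) k.succ_pos (by omega)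
  have hQ_herm : ∀ A ∈ Q '' Set.Iio n, A.IsHermitian := by
    rintro _ ⟨k, -, rfl⟩
    simp [hQ, IsHermitian, conjTranspose_pow, hP, mul_assoc]
  have hdim : finrank ℂ (krylovSpan ℂ 1 Q n) ≤ n :=
    (finrank_span_insert_one_le_of_pairwise_commute hQ_herm
      (pairwise_commute_iterate σ hPQ)).trans_eq (Fintype.card_fin n)
  have hQ_mem : ∀ k, Q k ∈ krylovSpan ℂ 1 Q n :=
    mem_krylovSpan_of_finrank_le (φ := σ.toAlgEquiv.toLinearMap) (map_one σ) one_ne_zero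
      (fun i => (Function.iterate_succ_apply' σ i P).symm) hdim
  have hcentral : krylovSpan ℂ 1 Q n ≤ (Subalgebra.centralizer ℂ {P}).toSubmodule := by
    refine span_le.mpr (Set.insert_subset (Subalgebra.one_mem _) ?_)
    rintro _ ⟨k, hk, rfl⟩
    exact (Subalgebra.mem_centralizer_iff ℂ).mpr fun _ hg => hg ▸ (hPQ k hk).eq
  intro k
  rw [← hQ]
  exact (Subalgebra.mem_centralizer_iff ℂ).mp (hcentral (hQ_mem k)) P rfl

theorem commute_pow_of_commute_pow_lt {n : ℕ} (U P : Matrix (Fin n) (Fin n) ℂ)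
    (hU : Uᴴ * U = 1) (hP : Pᴴ = P) (hPne : P ≠ 1)
    (hcomm : ∀ k : ℕ, 1 ≤ k → k ≤ n - 1 → Commute P ((Uᴴ) ^ k * P * U ^ k)) :
    ∀ k : ℕ, Commute P ((Uᴴ) ^ k * P * U ^ k) :=
  commute_pow_of_commute_pow_lt_general U P hU hP hcomm
end

section
/- Let n ≥ 2, let C be the n×n cyclic shift matrix (C e_1 = e_n, C e_k = e_{k-1} for k ≥ 2), let W be block diagonal with identity I_{n-2} and the 2×2 block (1/√2)[[1,−1],[1,1]], let U = WC, and let P = E_{1,1}. Then for k = 1, …, n−2 the matrix (U*)^k P U^k equals E_{k+1,k+1} (and hence commutes with P), but (U*)^{n-1} P U^{n-1} does not commute with P. -/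
/-!
Rows `0, …, n - 3` of `U = W C` are those of the cyclic shift, so row `0` of `U ^ k` is `e_k` for
`k ≤ n - 2`, and `(U ^ k)ᴴ E₀₀ U ^ k` is the outer product of that row with itself, i.e. `E_kk`.
One more step lands on the rotated row `(e_{n-1} - e_0) / √2`; its outer product has a nonzero
`(0, n - 1)` entry, which no matrix commuting with `E₀₀` can have.
-/

open Matrix Fin.NatCast

section

variable {ι R : Type*} [Fintype ι] [DecidableEq ι]

theorem conjTranspose_mul_single_one_mul [Semiring R] [StarRing R] (A : Matrix ι ι R) (a : ι) :
    Aᴴ * single a a 1 * A = vecMulVec (star (A a)) (A a) := by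
  rw [single_eq_single_vecMulVec_single, mul_vecMulVec, vecMulVec_mul, mulVec_single_one,
    single_one_vecMul]
  rfl

theorem conjTranspose_mul_single_one_mul_of_row_eq [Semiring R] [StarRing R]
    {A : Matrix ι ι R} {a b : ι} (h : A a = Pi.single b 1) :
    Aᴴ * single a a 1 * A = single b b 1 := by
  rw [conjTranspose_mul_single_one_mul, h, single_eq_single_vecMulVec_single, ← Pi.single_star,
    star_one]

theorem apply_eq_zero_of_commute_single_one [Semiring R] {M : Matrix ι ι R} {a b : ι}
    (h : Commute (single a a 1) M) (hb : a ≠ b) : M a b = 0 := by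
  have hab := congrFun (congrFun h.eq a) b
  rwa [single_mul_apply_same, one_mul, mul_single_apply_of_ne _ _ _ _ _ hb.symm] at hab

theorem mul_row_eq_of_row_eq_single [NonAssocSemiring R] {A : Matrix ι ι R} {i j : ι}
    (h : A i = Pi.single j 1) (B : Matrix ι ι R) : (A * B) i = B j := by
  rw [mul_apply_eq_vecMul, h, single_one_vecMul]
  rfl

end

theorem pow_row_zero_eq_single {R : Type*} [Semiring R] {n : ℕ} [NeZero n]
    {A : Matrix (Fin n) (Fin n) R} {k : ℕ}
    (hA : ∀ j < k, A (j : Fin n) = Pi.single ((j : Fin n) + 1) 1) :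
    (A ^ k) 0 = Pi.single (k : Fin n) 1 := by
  induction k with
  | zero => ext j; simp [one_apply, Pi.single_apply, eq_comm]
  | succ k ih =>
    rw [pow_succ, mul_row_eq_of_row_eq_single (ih fun j hj => hA j (by omega)),
      hA k k.lt_succ_self, Nat.cast_succ]

def cyclicShift (n : ℕ) : Matrix (Fin n) (Fin n) ℂ :=
  Matrix.of fun i j : Fin n => if ((i : ℕ) + 1) % n = (j : ℕ) then (1 : ℂ) else 0

theorem cyclicShift_row {n : ℕ} [NeZero n] (i : Fin n) :
    cyclicShift n i = Pi.single (i + 1) 1 := by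
  ext j
  simp [cyclicShift, Pi.single_apply, Fin.ext_iff, Fin.val_add, eq_comm]

noncomputable def rotationBlockDiag (n : ℕ) : Matrix (Fin n) (Fin n) ℂ :=
  Matrix.of fun i j : Fin n =>
    if (i : ℕ) < n - 2 then (if i = j then (1 : ℂ) else 0)
    else if (i : ℕ) = n - 2 then
      (if (j : ℕ) = n - 2 then (1 / Real.sqrt 2 : ℝ) else
       if (j : ℕ) = n - 1 then (-(1 / Real.sqrt 2) : ℝ) else 0)
    else
      (if (j : ℕ) = n - 2 then (1 / Real.sqrt 2 : ℝ) else
       if (j : ℕ) = n - 1 then (1 / Real.sqrt 2 : ℝ) else 0)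

theorem rotationBlockDiag_row_of_lt {n : ℕ} {i : Fin n} (hi : (i : ℕ) < n - 2) :
    rotationBlockDiag n i = Pi.single i 1 := by
  ext j
  simp [rotationBlockDiag, hi, Pi.single_apply, eq_comm]

theorem rotationBlockDiag_row_sub_two {n : ℕ} [NeZero n] (hn : 2 ≤ n) :
    rotationBlockDiag n ((n - 2 : ℕ) : Fin n) =
      ((1 / Real.sqrt 2 : ℝ) : ℂ) •
        (Pi.single ((n - 2 : ℕ) : Fin n) 1 - Pi.single ((n - 1 : ℕ) : Fin n) 1) := by
  ext j
  have h2 : (n - 2) % n = n - 2 := Nat.mod_eq_of_lt (by omega)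
  have h1 : (n - 1) % n = n - 1 := Nat.mod_eq_of_lt (by omega)
  have h12 : n - 1 ≠ n - 2 := by omega
  by_cases hj2 : (j : ℕ) = n - 2
  · simp [rotationBlockDiag, Pi.single_apply, Fin.ext_iff, h1, h2, h12.symm, hj2]
  by_cases hj1 : (j : ℕ) = n - 1
  · simp [rotationBlockDiag, Pi.single_apply, Fin.ext_iff, h1, h2, h12, hj1]
  · simp [rotationBlockDiag, Fin.ext_iff, h1, h2, hj1, hj2]

theorem rotationBlockDiag_mul_cyclicShift_row_of_lt {n : ℕ} [NeZero n] {i : Fin n}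
    (hi : (i : ℕ) < n - 2) : (rotationBlockDiag n * cyclicShift n) i = Pi.single (i + 1) 1 := by
  rw [mul_row_eq_of_row_eq_single (rotationBlockDiag_row_of_lt hi), cyclicShift_row]

theorem rotationBlockDiag_mul_cyclicShift_row_sub_two {n : ℕ} [NeZero n] (hn : 2 ≤ n) :
    (rotationBlockDiag n * cyclicShift n) ((n - 2 : ℕ) : Fin n) =
      ((1 / Real.sqrt 2 : ℝ) : ℂ) • (Pi.single ((n - 1 : ℕ) : Fin n) 1 - Pi.single 0 1) := by
  rw [mul_apply_eq_vecMul, rotationBlockDiag_row_sub_two hn, smul_vecMul, sub_vecMul,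
    single_one_vecMul, single_one_vecMul, row, cyclicShift_row, cyclicShift_row,
    ← Nat.cast_add_one, ← Nat.cast_add_one, show n - 2 + 1 = n - 1 by omega,
    show n - 1 + 1 = n by omega, Fin.natCast_self]

theorem cycle_example_sharp {n : ℕ} (hn : 2 ≤ n)
    (C W U P : Matrix (Fin n) (Fin n) ℂ)
    (hC : C = Matrix.of fun i j : Fin n => if ((i : ℕ) + 1) % n = (j : ℕ) then (1 : ℂ) else 0)
    (hW : W = Matrix.of fun i j : Fin n =>
      if (i : ℕ) < n - 2 then (if i = j then (1 : ℂ) else 0)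
      else if (i : ℕ) = n - 2 then
        (if (j : ℕ) = n - 2 then (1 / Real.sqrt 2 : ℝ) else
         if (j : ℕ) = n - 1 then (-(1 / Real.sqrt 2) : ℝ) else 0)
      else -- (i : ℕ) = n - 1
        (if (j : ℕ) = n - 2 then (1 / Real.sqrt 2 : ℝ) else
         if (j : ℕ) = n - 1 then (1 / Real.sqrt 2 : ℝ) else 0))
    (hU : U = W * C)
    (hP : P = Matrix.single (⟨0, by omega⟩ : Fin n) (⟨0, by omega⟩ : Fin n) (1 : ℂ)) :
    (∀ k : ℕ, 1 ≤ k → k ≤ n - 2 → ∀ hk : k < n,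
        (Uᴴ) ^ k * P * U ^ k = Matrix.single (⟨k, hk⟩ : Fin n) (⟨k, hk⟩ : Fin n) (1 : ℂ)) ∧
    ¬ Commute P ((Uᴴ) ^ (n - 1) * P * U ^ (n - 1)) := by
  have : NeZero n := ⟨by omega⟩
  replace hU : U = rotationBlockDiag n * cyclicShift n := hU.trans (by rw [hW, hC]; rfl)
  replace hP : P = single 0 0 1 := hP
  have hpow : ∀ k ≤ n - 2, (U ^ k) 0 = Pi.single (k : Fin n) 1 := fun k hk =>
    pow_row_zero_eq_single fun j hj => by
      have hj' : ((j : Fin n) : ℕ) < n - 2 := by rw [Fin.val_cast_of_lt (by omega)]; omega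
      rw [hU, rotationBlockDiag_mul_cyclicShift_row_of_lt hj']
  refine ⟨fun k _ hk hkn => ?_, fun hcomm => ?_⟩
  · rw [← conjTranspose_pow, hP, conjTranspose_mul_single_one_mul_of_row_eq (hpow k hk),
      show (k : Fin n) = ⟨k, hkn⟩ from Fin.ext (Fin.val_cast_of_lt hkn)]
  · have hlast : (U ^ (n - 1)) 0 =
        ((1 / Real.sqrt 2 : ℝ) : ℂ) • (Pi.single ((n - 1 : ℕ) : Fin n) 1 - Pi.single 0 1) := by
      rw [show n - 1 = n - 2 + 1 by omega, pow_succ,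
        mul_row_eq_of_row_eq_single (hpow _ le_rfl), hU,
        rotationBlockDiag_mul_cyclicShift_row_sub_two hn, show n - 2 + 1 = n - 1 by omega]
    have hne : (0 : Fin n) ≠ ((n - 1 : ℕ) : Fin n) := by
      rw [ne_eq, Fin.ext_iff, Fin.val_natCast, Nat.mod_eq_of_lt (by omega), Fin.val_zero]
      omega
    rw [← conjTranspose_pow, hP, conjTranspose_mul_single_one_mul] at hcomm
    have hentry := apply_eq_zero_of_commute_single_one hcomm hne
    rw [vecMulVec_apply, hlast] at hentry
    simp [hne, hne.symm] at hentry
end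

section
/- An invertible matrix A ∈ M_n(ℂ) is similar to a weighted permutation if and only if A is diagonalizable. -/
/-!
If `B` is an invertible weighted permutation matrix with underlying permutation `σ`, then
`B ^ m` (with `m = orderOf σ`) is diagonal with nonzero entries `c i`. Hence `B` is annihilated by
`∏ a ∈ {c i}, (X ^ m - a)`, which is separable in characteristic zero since the `a` are distinct
and nonzero; so `B` is semisimple, and over `ℂ` it has a basis of eigenvectors. Similarity
preserves invertibility, and diagonal matrices are weighted permutations.
-/

open Matrix

open Polynomial Module

section WeightedPermMatrix

variable {ι R : Type*} [DecidableEq ι] [CommSemiring R]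

def weightedPermMatrix (σ : Equiv.Perm ι) (w : ι → R) : Matrix ι ι R :=
  of fun i j => if i = σ j then w j else 0

lemma weightedPermMatrix_one (w : ι → R) : weightedPermMatrix 1 w = diagonal w := by
  ext i j
  by_cases h : i = j <;> simp [weightedPermMatrix, h]

variable [Fintype ι]

lemma weightedPermMatrix_mul (σ τ : Equiv.Perm ι) (w u : ι → R) :
    weightedPermMatrix σ w * weightedPermMatrix τ u =
      weightedPermMatrix (σ * τ) (fun j => w (τ j) * u j) := by
  ext i j
  simp [weightedPermMatrix, mul_apply]
  rfl

lemma weightedPermMatrix_pow (σ : Equiv.Perm ι) (w : ι → R) (k : ℕ) :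
    weightedPermMatrix σ w ^ k =
      weightedPermMatrix (σ ^ k) (fun j => ∏ l ∈ Finset.range k, w ((σ ^ l) j)) := by
  induction k with
  | zero => simp [weightedPermMatrix_one]
  | succ k ih =>
    rw [pow_succ, ih, weightedPermMatrix_mul, ← pow_succ]
    congr 1
    funext j
    rw [Finset.prod_range_succ']
    simp [pow_succ, mul_comm]

lemma weightedPermMatrix_pow_orderOf (σ : Equiv.Perm ι) (w : ι → R) :
    weightedPermMatrix σ w ^ orderOf σ =
      diagonal (fun j => ∏ l ∈ Finset.range (orderOf σ), w ((σ ^ l) j)) := by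
  rw [weightedPermMatrix_pow, pow_orderOf_eq_one, weightedPermMatrix_one]

end WeightedPermMatrix

lemma IsWeightedPerm.exists_eq_weightedPermMatrix {n : ℕ} {B : Matrix (Fin n) (Fin n) ℂ}
    (hB : IsWeightedPerm B) (hunit : IsUnit B) :
    ∃ (σ : Equiv.Perm (Fin n)) (w : Fin n → ℂ), (∀ j, w j ≠ 0) ∧ B = weightedPermMatrix σ w := by
  have hcol : ∀ j, ∃ i, B i j ≠ 0 := by
    intro j
    by_contra! hzero
    exact (isUnit_iff_isUnit_det B).mp hunit |>.ne_zero (det_eq_zero_of_column_eq_zero j hzero)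
  choose g hg using hcol
  have hg_inj : Function.Injective g := fun j₁ j₂ h => hB.1 (g j₁) j₁ j₂ (hg j₁) (h ▸ hg j₂)
  refine ⟨Equiv.ofBijective g hg_inj.bijective_of_finite, fun j => B (g j) j, hg, ?_⟩
  ext i j
  by_cases hi : i = g j
  · simp [weightedPermMatrix, hi]
  · simp only [weightedPermMatrix, of_apply, Equiv.ofBijective_apply, hi, if_false]
    by_contra hij
    exact hi (hB.2 j i (g j) hij (hg j))

lemma isWeightedPerm_diagonal {n : ℕ} (d : Fin n → ℂ) : IsWeightedPerm (diagonal d) := by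
  have hdiag : ∀ i j, diagonal d i j ≠ 0 → i = j := fun i j h =>
    by_contra fun hij => h (diagonal_apply_ne d hij)
  exact ⟨fun i j₁ j₂ h₁ h₂ => (hdiag i j₁ h₁).symm.trans (hdiag i j₂ h₂),
    fun j i₁ i₂ h₁ h₂ => (hdiag i₁ j h₁).trans (hdiag i₂ j h₂).symm⟩

lemma Matrix.aeval_diagonal {R α ι : Type*} [CommSemiring R] [CommSemiring α] [Algebra R α]
    [Fintype ι] [DecidableEq ι] (c : ι → α) (q : R[X]) :
    aeval (diagonal c) q = diagonal fun i => aeval (c i) q := by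
  rw [← diagonalAlgHom_apply R, aeval_algHom_apply, aeval_pi_apply]
  rfl

lemma Matrix.isSemisimple_toLin'_of_pow_eq_diagonal {K ι : Type*} [Field K] [Fintype ι]
    [DecidableEq ι] {B : Matrix ι ι K} {m : ℕ} (hm : (m : K) ≠ 0) {c : ι → K}
    (hc : ∀ i, c i ≠ 0) (hB : B ^ m = diagonal c) : End.IsSemisimple (toLin' B) := by
  classical
  let q : K[X] := ∏ a ∈ Finset.univ.image c, (X - C a)
  have hsep : (q.comp (X ^ m)).Separable := by
    simp only [q, prod_comp, sub_comp, X_comp, C_comp]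
    refine separable_prod' (fun a _ b _ hab => ?_) fun a ha => ?_
    · simpa using (isCoprime_X_sub_C_of_isUnit_sub (sub_ne_zero.mpr hab).isUnit).map
        (compRingHom (X ^ m : K[X]))
    · obtain ⟨i, -, rfl⟩ := Finset.mem_image.mp ha
      exact separable_X_pow_sub_C (c i) hm (hc i)
  have hq : aeval B (q.comp (X ^ m)) = 0 := by
    have hroot : ∀ i, aeval (c i) q = 0 := fun i => by
      simpa [q, eval_prod] using
        Finset.prod_eq_zero (Finset.mem_image_of_mem c (Finset.mem_univ i)) (sub_self (c i))
    rw [aeval_comp, map_pow, aeval_X, hB, aeval_diagonal]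
    simp [hroot]
  refine End.isSemisimple_of_squarefree_aeval_eq_zero hsep.squarefree ?_
  change aeval (toLinAlgEquiv' B) _ = 0
  rw [aeval_algEquiv, AlgHom.comp_apply, hq, map_zero]

lemma Module.End.exists_basis_apply_eq_smul_of_iSup_eigenspace_eq_top
    {K V ι : Type*} [Field K] [AddCommGroup V] [Module K V] {f : End K V}
    (hf : ⨆ μ, f.eigenspace μ = ⊤) (b₀ : Basis ι K V) :
    ∃ (b : Basis ι K V) (d : ι → K), ∀ i, f (b i) = d i • b i := by
  classical
  have hint := DirectSum.isInternal_submodule_of_iSupIndep_of_iSup_eq_top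
    f.eigenspaces_iSupIndep hf
  let b := hint.collectedBasis fun μ => Free.chooseBasis K (f.eigenspace μ)
  let e := b.indexEquiv b₀
  refine ⟨b.reindex e, fun i => (e.symm i).1, fun i => ?_⟩
  rw [Basis.reindex_apply]
  exact mem_eigenspace_iff.mp (hint.collectedBasis_mem _ _)

lemma Matrix.exists_similar_diagonal_of_mulVec_basis_eq_smul {K ι : Type*} [Field K] [Fintype ι]
    [DecidableEq ι] {B : Matrix ι ι K} (b : Basis ι K (ι → K)) (d : ι → K)
    (hb : ∀ i, B *ᵥ b i = d i • b i) :
    ∃ S : Matrix ι ι K, IsUnit S ∧ B = S⁻¹ * diagonal d * S := by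
  let P := (Pi.basisFun K ι).toMatrix b
  have hP : IsUnit P :=
    letI := (Pi.basisFun K ι).invertibleToMatrix b
    isUnit_of_invertible P
  have hBP : B * P = P * diagonal d := by
    ext k i
    have := congr_fun (hb i) k
    simp only [mulVec, dotProduct, Pi.smul_apply, smul_eq_mul] at this
    simp [P, mul_apply, Basis.toMatrix_apply, this, diagonal_apply, mul_comm]
  have hdetP := (isUnit_iff_isUnit_det P).mp hP
  refine ⟨P⁻¹, isUnit_nonsing_inv_iff.mpr hP, ?_⟩
  rw [nonsing_inv_nonsing_inv P hdetP, ← hBP, mul_nonsing_inv_cancel_right P B hdetP]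

lemma Matrix.exists_similar_diagonal_of_isSemisimple {K ι : Type*} [Field K] [IsAlgClosed K]
    [Fintype ι] [DecidableEq ι] {B : Matrix ι ι K} (hB : End.IsSemisimple (toLin' B)) :
    ∃ (S : Matrix ι ι K) (d : ι → K), IsUnit S ∧ B = S⁻¹ * diagonal d * S := by
  obtain ⟨b, d, hb⟩ := End.exists_basis_apply_eq_smul_of_iSup_eigenspace_eq_top
    hB.iSup_eigenspace_eq_top (Pi.basisFun K ι)
  obtain ⟨S, hS, hBS⟩ := exists_similar_diagonal_of_mulVec_basis_eq_smul b d
    fun i => (toLin'_apply B (b i)).symm.trans (hb i)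
  exact ⟨S, d, hS, hBS⟩

lemma Matrix.exists_similar_diagonal_weightedPermMatrix {K ι : Type*} [Field K] [IsAlgClosed K]
    [CharZero K] [Fintype ι] [DecidableEq ι] (σ : Equiv.Perm ι) {w : ι → K} (hw : ∀ j, w j ≠ 0) :
    ∃ (S : Matrix ι ι K) (d : ι → K),
      IsUnit S ∧ weightedPermMatrix σ w = S⁻¹ * diagonal d * S :=
  exists_similar_diagonal_of_isSemisimple <|
    isSemisimple_toLin'_of_pow_eq_diagonal (Nat.cast_ne_zero.mpr (orderOf_pos σ).ne')
      (fun _ => Finset.prod_ne_zero_iff.mpr fun _ _ => hw _) (weightedPermMatrix_pow_orderOf σ w)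

theorem invertible_similar_weightedPerm_iff_diagonalizable {n : ℕ}
    (A : Matrix (Fin n) (Fin n) ℂ) (hA : IsUnit A) :
    (∃ (S B : Matrix (Fin n) (Fin n) ℂ), IsUnit S ∧ IsWeightedPerm B ∧ A = S⁻¹ * B * S) ↔
    (∃ (S : Matrix (Fin n) (Fin n) ℂ) (d : Fin n → ℂ),
      IsUnit S ∧ A = S⁻¹ * Matrix.diagonal d * S) := by
  constructor
  · rintro ⟨S, B, hS, hB, rfl⟩
    have hBunit : IsUnit B := by
      rwa [isUnit_iff_isUnit_det, det_conj' hS, ← isUnit_iff_isUnit_det] at hA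
    obtain ⟨σ, w, hw, rfl⟩ := hB.exists_eq_weightedPermMatrix hBunit
    obtain ⟨T, d, hT, hσw⟩ := exists_similar_diagonal_weightedPermMatrix σ hw
    refine ⟨T * S, d, hT.mul hS, ?_⟩
    rw [hσw, Matrix.mul_inv_rev]
    simp only [Matrix.mul_assoc]
  · rintro ⟨S, d, hS, hAd⟩
    exact ⟨S, diagonal d, hS, isWeightedPerm_diagonal d, hAd⟩
end
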